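/- arXiv:math/0507277 — 5 statements merged into one kernel-verified Lean document; each statement's English description precedes it below -/
import Mathlib

section
/- Every vector v in the lattice L = π(Z^S) (where π is the projection of R^S modulo the span of e_C, C ∈ B_max) has a unique expansion v = Σ_{I ∈ B − B_max} c_I ē_I with all c_I nonnegative integers and {I : c_I > 0} a nested set. -/
open Finset

variable {V : Type*} [Fintype V] [DecidableEq V]

/-- A building set on the ground set `S`. -/
def IsBuilding (S : Finset V) (B : Finset (Finset V)) : Prop :=
  (∀ I ∈ B, I.Nonempty ∧ I ⊆ S) ∧
  (∀ I ∈ B, ∀ J ∈ B, (I ∩ J).Nonempty → I ∪ J ∈ B) ∧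
  (∀ i ∈ S, ({i} : Finset V) ∈ B)

/-- The maximal (by inclusion) elements of a family of sets. -/
def buildingMax (B : Finset (Finset V)) : Finset (Finset V) :=
  B.filter (fun I => ∀ J ∈ B, I ⊆ J → I = J)

/-- `N` is a nested set for the building `B`. -/
def IsNested (B N : Finset (Finset V)) : Prop :=
  N ⊆ B \ buildingMax B ∧
  ∀ F ⊆ N, 2 ≤ F.card → (∀ I ∈ F, ∀ J ∈ F, I ≠ J → ¬ I ⊆ J) → F.sup id ∉ B

/-- `N` is a maximal nested set for the building `B`. -/
def IsMaxNested (B N : Finset (Finset V)) : Prop :=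
  IsNested B N ∧ ∀ M, IsNested B M → N ⊆ M → N = M

/-- The restriction of `B` to `C`. -/
def restrictB (B : Finset (Finset V)) (C : Finset V) : Finset (Finset V) :=
  B.filter (· ⊆ C)

/-- The contraction of `C` from `B` (on ground set `S`). -/
def contractB (S : Finset V) (B : Finset (Finset V)) (C : Finset V) : Finset (Finset V) :=
  (S \ C).powerset.filter (fun I => I.Nonempty ∧ (I ∈ B ∨ C ∪ I ∈ B))

/-- The vector `e_I = Σ_{i ∈ I} e_i` in `ℝ^V`. -/
def eVec (I : Finset V) : V → ℝ := fun i => if i ∈ I then 1 else 0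

/-- The span of the vectors `e_C` for the `B`-components `C`. -/
def compSpan (B : Finset (Finset V)) : Submodule ℝ (V → ℝ) :=
  Submodule.span ℝ {x | ∃ C ∈ buildingMax B, x = eVec C}

set_option linter.unusedSectionVars false

-- L1: every member of a family lies below a maximal member
lemma exists_max_above (A : Finset (Finset V)) {I : Finset V} (hI : I ∈ A) :
    ∃ D ∈ buildingMax A, I ⊆ D := by
  classical
  have hne : (A.filter (fun J => I ⊆ J)).Nonempty := ⟨I, by simp [hI]⟩
  obtain ⟨D, hD, hmax⟩ := Finset.exists_max_image _ (fun J => J.card) hne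
  rw [Finset.mem_filter] at hD
  refine ⟨D, ?_, hD.2⟩
  rw [buildingMax, Finset.mem_filter]
  refine ⟨hD.1, fun J hJ hDJ => ?_⟩
  have hJf : J ∈ A.filter (fun J => I ⊆ J) := by
    rw [Finset.mem_filter]; exact ⟨hJ, hD.2.trans hDJ⟩
  exact Finset.eq_of_subset_of_card_le hDJ (hmax J hJf)

-- L3
lemma subset_max_of_inter {A : Finset (Finset V)}
    (hcl : ∀ I ∈ A, ∀ J ∈ A, (I ∩ J).Nonempty → I ∪ J ∈ A)
    {I D : Finset V} (hI : I ∈ A) (hD : D ∈ buildingMax A)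
    (h : (I ∩ D).Nonempty) : I ⊆ D := by
  rw [buildingMax, Finset.mem_filter] at hD
  have hu : I ∪ D ∈ A := hcl I hI D hD.1 h
  have := hD.2 (I ∪ D) hu subset_union_right
  rw [this]
  exact subset_union_left

-- L2
lemma max_eq_of_inter {A : Finset (Finset V)}
    (hcl : ∀ I ∈ A, ∀ J ∈ A, (I ∩ J).Nonempty → I ∪ J ∈ A)
    {C D : Finset V} (hC : C ∈ buildingMax A) (hD : D ∈ buildingMax A)
    (h : (C ∩ D).Nonempty) : C = D := by
  have h1 : C ⊆ D := subset_max_of_inter hcl (Finset.mem_filter.mp hC).1 hD h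
  have h2 : D ⊆ C := subset_max_of_inter hcl (Finset.mem_filter.mp hD).1 hC
    (by rwa [Finset.inter_comm])
  exact subset_antisymm h1 h2

lemma mem_restrictB {B : Finset (Finset V)} {T I : Finset V} :
    I ∈ restrictB B T ↔ I ∈ B ∧ I ⊆ T := Finset.mem_filter

lemma restrict_closed {B : Finset (Finset V)} (hB : IsBuilding Finset.univ B) (T : Finset V) :
    ∀ I ∈ restrictB B T, ∀ J ∈ restrictB B T, (I ∩ J).Nonempty → I ∪ J ∈ restrictB B T := by
  intro I hI J hJ h
  rw [mem_restrictB] at *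
  exact ⟨hB.2.1 I hI.1 J hJ.1 h, Finset.union_subset hI.2 hJ.2⟩

-- components of T
lemma comps_cover {B : Finset (Finset V)} (hB : IsBuilding Finset.univ B) {T : Finset V}
    {i : V} (hi : i ∈ T) : ∃ D ∈ buildingMax (restrictB B T), i ∈ D := by
  have h1 : ({i} : Finset V) ∈ restrictB B T := by
    rw [mem_restrictB]
    exact ⟨hB.2.2 i (Finset.mem_univ i), by simpa using hi⟩
  obtain ⟨D, hD, hsub⟩ := exists_max_above _ h1
  exact ⟨D, hD, by simpa using hsub⟩

lemma comp_mem {B : Finset (Finset V)} {T D : Finset V}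
    (hD : D ∈ buildingMax (restrictB B T)) : D ∈ B ∧ D ⊆ T :=
  mem_restrictB.mp (Finset.mem_filter.mp hD).1

def natSum (B : Finset (Finset V)) (c : Finset V → ℕ) : V → ℕ :=
  fun i => ∑ I ∈ B \ buildingMax B, if i ∈ I then c I else 0

lemma sum_comp_indicator {B : Finset (Finset V)} (hB : IsBuilding Finset.univ B)
    (T : Finset V) (i : V) :
    ∑ D ∈ buildingMax (restrictB B T), (if i ∈ D then 1 else 0) = (if i ∈ T then 1 else 0) := by
  by_cases hi : i ∈ T
  · obtain ⟨D₀, hD₀, hiD₀⟩ := comps_cover hB hi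
    rw [if_pos hi, Finset.sum_eq_single_of_mem D₀ hD₀]
    · rw [if_pos hiD₀]
    · intro D hD hne
      rw [if_neg]
      intro hiD
      exact hne (max_eq_of_inter (restrict_closed hB T) hD hD₀ ⟨i, Finset.mem_inter.mpr ⟨hiD, hiD₀⟩⟩)
  · rw [if_neg hi, Finset.sum_eq_zero]
    intro D hD
    rw [if_neg]
    intro hiD
    exact hi ((comp_mem hD).2 hiD)

lemma comp_not_max {B : Finset (Finset V)} {T D : Finset V}
    (hT : ∀ C ∈ buildingMax B, ¬ C ⊆ T)
    (hD : D ∈ buildingMax (restrictB B T)) : D ∈ B \ buildingMax B := by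
  rw [Finset.mem_sdiff]
  refine ⟨(comp_mem hD).1, fun h => hT D h (comp_mem hD).2⟩

lemma exists_nat_expansion {B : Finset (Finset V)} (hB : IsBuilding Finset.univ B) :
    ∀ (n : ℕ) (u : V → ℕ), (∑ i, u i) = n →
    (∀ C ∈ buildingMax B, ∃ i ∈ C, u i = 0) →
    ∃ c : Finset V → ℕ,
      (∀ I, c I ≠ 0 → I ∈ B \ buildingMax B ∧ ∀ i ∈ I, u i ≠ 0) ∧
      (∀ F : Finset (Finset V), (∀ I ∈ F, c I ≠ 0) → 2 ≤ F.card →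
        (∀ I ∈ F, ∀ J ∈ F, I ≠ J → ¬ I ⊆ J) → F.sup id ∉ B) ∧
      natSum B c = u := by
  intro n
  induction n using Nat.strong_induction_on with
  | _ n ih =>
    intro u hn hinv
    by_cases h0 : ∀ i, u i = 0
    · refine ⟨0, by simp, ?_, ?_⟩
      · intro F hF hcard _
        obtain ⟨I, hI⟩ := Finset.card_pos.mp (lt_of_lt_of_le Nat.zero_lt_two hcard)
        exact absurd (rfl : (0:ℕ) = 0) (by simpa using hF I hI)
      · funext i
        simp [natSum, h0 i]
    · push_neg at h0
      obtain ⟨i₀, hi₀⟩ := h0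
      set T : Finset V := Finset.univ.filter (fun i => u i ≠ 0) with hT
      have hmemT : ∀ i, i ∈ T ↔ u i ≠ 0 := by intro i; simp [hT]
      set u' : V → ℕ := fun i => u i - 1 with hu'
      have hlt : (∑ i, u' i) < n := by
        rw [← hn]
        apply Finset.sum_lt_sum (fun i _ => Nat.sub_le _ _)
        exact ⟨i₀, Finset.mem_univ _, by omega⟩
      have hinv' : ∀ C ∈ buildingMax B, ∃ i ∈ C, u' i = 0 := by
        intro C hC
        obtain ⟨i, hiC, hiz⟩ := hinv C hC
        exact ⟨i, hiC, by simp [hu', hiz]⟩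
      obtain ⟨c', hsupp', hnest', hsum'⟩ := ih _ hlt u' rfl hinv'
      have hTinv : ∀ C ∈ buildingMax B, ¬ C ⊆ T := by
        intro C hC hsub
        obtain ⟨i, hiC, hiz⟩ := hinv C hC
        exact ((hmemT i).mp (hsub hiC)) hiz
      set K := buildingMax (restrictB B T) with hK
      refine ⟨fun I => c' I + (if I ∈ K then 1 else 0), ?_, ?_, ?_⟩
      · intro I hI
        by_cases hIK : I ∈ K
        · refine ⟨comp_not_max hTinv hIK, fun i hiI => (hmemT i).mp ((comp_mem hIK).2 hiI)⟩
        · simp only [if_neg hIK, Nat.add_zero] at hI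
          obtain ⟨h1, h2⟩ := hsupp' I hI
          exact ⟨h1, fun i hiI => by have := h2 i hiI; simp only [hu'] at this; omega⟩
      · intro F hF hcard hanti hFB
        by_cases hDK : ∃ D ∈ F, D ∈ K
        · obtain ⟨D, hDF, hDK⟩ := hDK
          -- sup F ∈ restrictB B T, D ⊆ sup F, D maximal there
          have hsub : ∀ I ∈ F, I ⊆ T := by
            intro I hI i hiI
            rw [hmemT]
            by_cases hIK : I ∈ K
            · exact ((hmemT i).mp ((comp_mem hIK).2 hiI))
            · have h3 := hF I hI
              simp only [if_neg hIK, Nat.add_zero] at h3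
              have := (hsupp' I h3).2 i hiI
              simp only [hu'] at this; omega
          have hsupT : F.sup id ≤ T := Finset.sup_le fun I hI => hsub I hI
          have hsupR : F.sup id ∈ restrictB B T := mem_restrictB.mpr ⟨hFB, hsupT⟩
          have hDsup : D ⊆ F.sup id := Finset.le_sup (f := id) hDF
          have hEq : D = F.sup id := (Finset.mem_filter.mp hDK).2 _ hsupR hDsup
          obtain ⟨J, hJF, hJD⟩ : ∃ J ∈ F, J ≠ D := by
            by_contra hcon
            push_neg at hcon
            have : F ⊆ {D} := fun J hJ => Finset.mem_singleton.mpr (hcon J hJ)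
            have := Finset.card_le_card this
            simp at this; omega
          have hJsub : (id J : Finset V) ≤ F.sup id := Finset.le_sup (f := id) hJF
          rw [← hEq] at hJsub
          exact hanti J hJF D hDF hJD hJsub
        · push_neg at hDK
          refine hnest' F (fun I hI => ?_) hcard hanti hFB
          have h3 := hF I hI
          simpa only [if_neg (hDK I hI), Nat.add_zero] using h3
      · funext i
        have hsplit : natSum B (fun I => c' I + (if I ∈ K then 1 else 0)) i
            = natSum B c' i + ∑ I ∈ B \ buildingMax B, (if i ∈ I then (if I ∈ K then 1 else 0) else 0) := by
          rw [natSum, natSum, ← Finset.sum_add_distrib]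
          apply Finset.sum_congr rfl
          intro I _
          split <;> simp
        have hKsub : K ⊆ B \ buildingMax B := fun D hD => comp_not_max hTinv hD
        have hsecond : ∑ I ∈ B \ buildingMax B, (if i ∈ I then (if I ∈ K then 1 else 0) else 0)
            = if i ∈ T then 1 else 0 := by
          have h1 : ∀ I : Finset V, (if i ∈ I then (if I ∈ K then 1 else 0) else 0)
              = (if I ∈ K then (if i ∈ I then 1 else 0) else 0) := by
            intro I; split_ifs <;> rfl
          calc ∑ I ∈ B \ buildingMax B, (if i ∈ I then (if I ∈ K then 1 else 0) else 0)
              = ∑ I ∈ B \ buildingMax B, (if I ∈ K then (if i ∈ I then 1 else 0) else 0) :=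
                Finset.sum_congr rfl (fun I _ => h1 I)
            _ = ∑ I ∈ K, (if I ∈ K then (if i ∈ I then 1 else 0) else 0) :=
                (Finset.sum_subset hKsub (fun I _ hIK => by rw [if_neg hIK])).symm
            _ = ∑ I ∈ K, (if i ∈ I then 1 else 0) :=
                Finset.sum_congr rfl (fun I hI => by rw [if_pos hI])
            _ = if i ∈ T then 1 else 0 := by rw [hK]; exact sum_comp_indicator hB T i
        rw [hsplit, hsecond, hsum']
        simp only [hu']
        by_cases hiT : i ∈ T
        · rw [if_pos hiT]
          have := (hmemT i).mp hiT
          omega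
        · rw [if_neg hiT]
          have := (hmemT i)
          have : u i = 0 := by by_contra hc; exact hiT ((hmemT i).mpr hc)
          omega

lemma natSum_add (B : Finset (Finset V)) (a b : Finset V → ℕ) (i : V) :
    natSum B (fun I => a I + b I) i = natSum B a i + natSum B b i := by
  rw [natSum, natSum, natSum, ← Finset.sum_add_distrib]
  apply Finset.sum_congr rfl
  intro I _
  split <;> simp

lemma natSum_delta {B : Finset (Finset V)} (hB : IsBuilding Finset.univ B) {T : Finset V}
    (hTinv : ∀ C ∈ buildingMax B, ¬ C ⊆ T) (i : V) :
    natSum B (fun I => if I ∈ buildingMax (restrictB B T) then 1 else 0) i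
      = if i ∈ T then 1 else 0 := by
  set K := buildingMax (restrictB B T) with hK
  have hKsub : K ⊆ B \ buildingMax B := fun D hD => comp_not_max hTinv hD
  rw [natSum]
  have h1 : ∀ I : Finset V, (if i ∈ I then (if I ∈ K then 1 else 0) else 0)
      = (if I ∈ K then (if i ∈ I then 1 else 0) else 0) := by
    intro I; split_ifs <;> rfl
  calc ∑ I ∈ B \ buildingMax B, (if i ∈ I then (if I ∈ K then 1 else 0) else 0)
      = ∑ I ∈ B \ buildingMax B, (if I ∈ K then (if i ∈ I then 1 else 0) else 0) :=
        Finset.sum_congr rfl (fun I _ => h1 I)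
    _ = ∑ I ∈ K, (if I ∈ K then (if i ∈ I then 1 else 0) else 0) :=
        (Finset.sum_subset hKsub (fun I _ hIK => by rw [if_neg hIK])).symm
    _ = ∑ I ∈ K, (if i ∈ I then 1 else 0) :=
        Finset.sum_congr rfl (fun I hI => by rw [if_pos hI])
    _ = if i ∈ T then 1 else 0 := by rw [hK]; exact sum_comp_indicator hB T i

-- support of natSum is the union of the support family
lemma mem_suppT {B : Finset (Finset V)} {c : Finset V → ℕ}
    (hsupp : ∀ I, c I ≠ 0 → I ∈ B \ buildingMax B) (i : V) :
    natSum B c i ≠ 0 ↔ ∃ I, c I ≠ 0 ∧ i ∈ I := by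
  constructor
  · intro h
    rw [natSum] at h
    by_contra hcon
    push_neg at hcon
    apply h
    apply Finset.sum_eq_zero
    intro I _
    by_cases hiI : i ∈ I
    · rw [if_pos hiI]
      by_contra hc
      exact hcon I hc hiI
    · rw [if_neg hiI]
  · rintro ⟨I, hcI, hiI⟩
    have hIB := hsupp I hcI
    have : c I ≤ natSum B c i := by
      rw [natSum]
      calc c I = if i ∈ I then c I else 0 := by rw [if_pos hiI]
        _ ≤ _ := Finset.single_le_sum (f := fun J => if i ∈ J then c J else 0)
          (fun J _ => Nat.zero_le _) hIB
    omega

-- each point of C ∈ buildingMax B outside all members of a nested family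
lemma proper_union {B : Finset (Finset V)} (hB : IsBuilding Finset.univ B)
    {N : Finset (Finset V)} (hN : IsNested B N) {C : Finset V}
    (hC : C ∈ buildingMax B) : ∃ i ∈ C, ∀ I ∈ N, i ∉ I := by
  classical
  set P := N.filter (· ⊆ C) with hP
  have hPN : P ⊆ N := Finset.filter_subset _ _
  have hPsub : P.sup id ≤ C := Finset.sup_le fun I hI => (Finset.mem_filter.mp hI).2
  have hCB : C ∈ B := (Finset.mem_filter.mp hC).1
  have hCne : C.Nonempty := (hB.1 C hCB).1
  have hne : P.sup id ≠ C := by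
    intro hEq
    by_cases hPe : P = ∅
    · rw [hPe] at hEq
      simp at hEq
      exact (Finset.nonempty_iff_ne_empty.mp hCne) hEq.symm
    · set Q := buildingMax P with hQ
      have hQP : Q ⊆ P := Finset.filter_subset _ _
      have hsupQ : P.sup id = Q.sup id := by
        apply le_antisymm
        · apply Finset.sup_le
          intro I hI
          obtain ⟨J, hJQ, hIJ⟩ := exists_max_above P hI
          exact le_trans hIJ (Finset.le_sup (f := id) hJQ)
        · exact Finset.sup_le fun J hJ => Finset.le_sup (f := id) (hQP hJ)
      have hQne : Q.Nonempty := by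
        obtain ⟨I, hI⟩ := Finset.nonempty_iff_ne_empty.mpr hPe
        obtain ⟨J, hJQ, _⟩ := exists_max_above P hI
        exact ⟨J, hJQ⟩
      rcases Nat.lt_or_ge Q.card 2 with hc | hc
      · have : Q.card = 1 := by
          have := Finset.card_pos.mpr hQne
          omega
        obtain ⟨J, hJ⟩ := Finset.card_eq_one.mp this
        have : P.sup id = J := by rw [hsupQ, hJ, Finset.sup_singleton]; rfl
        have hJN : J ∈ N := hPN (hQP (by rw [hJ]; exact Finset.mem_singleton_self J))
        have hJmem := hN.1 hJN
        rw [Finset.mem_sdiff] at hJmem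
        apply hJmem.2
        rw [← this, hEq]
        exact hC
      · have hanti : ∀ I ∈ Q, ∀ J ∈ Q, I ≠ J → ¬ I ⊆ J := by
          intro I hI J hJ hne hsub
          exact hne ((Finset.mem_filter.mp hI).2 J (hQP hJ) hsub)
        have := hN.2 Q (hQP.trans hPN) hc hanti
        rw [← hsupQ, hEq] at this
        exact this hCB
  have hss : P.sup id ⊂ C := lt_of_le_of_ne hPsub hne
  obtain ⟨i, hiC, hiP⟩ := Finset.exists_of_ssubset hss
  refine ⟨i, hiC, fun I hIN hiI => ?_⟩
  have hImem := hN.1 hIN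
  rw [Finset.mem_sdiff] at hImem
  have hIC : I ⊆ C := subset_max_of_inter hB.2.1 hImem.1 hC
    ⟨i, Finset.mem_inter.mpr ⟨hiI, hiC⟩⟩
  have hmemP : I ∈ P := Finset.mem_filter.mpr ⟨hIN, hIC⟩
  have hle : (id I : Finset V) ≤ P.sup id := Finset.le_sup hmemP
  exact hiP (hle hiI)

lemma comp_pos {B : Finset (Finset V)} (hB : IsBuilding Finset.univ B)
    {c : Finset V → ℕ}
    (hsupp : ∀ I, c I ≠ 0 → I ∈ B \ buildingMax B)
    (hN : IsNested B ((B \ buildingMax B).filter (fun I => c I ≠ 0)))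
    {D : Finset V}
    (hD : D ∈ buildingMax (restrictB B (Finset.univ.filter (fun i => natSum B c i ≠ 0)))) :
    c D ≠ 0 := by
  classical
  set T := Finset.univ.filter (fun i => natSum B c i ≠ 0) with hT
  set N := (B \ buildingMax B).filter (fun I => c I ≠ 0) with hNdef
  have hmemN : ∀ I, I ∈ N ↔ c I ≠ 0 := by
    intro I
    rw [hNdef, Finset.mem_filter]
    exact ⟨fun h => h.2, fun h => ⟨hsupp I h, h⟩⟩
  have hmemT : ∀ i, i ∈ T ↔ ∃ I, c I ≠ 0 ∧ i ∈ I := by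
    intro i
    rw [hT]
    simp only [Finset.mem_filter, Finset.mem_univ, true_and]
    exact mem_suppT hsupp i
  have hNsubT : ∀ I ∈ N, I ⊆ T := by
    intro I hI i hiI
    exact (hmemT i).mpr ⟨I, (hmemN I).mp hI, hiI⟩
  set F := (buildingMax N).filter (fun J => (J ∩ D).Nonempty) with hF
  have hFN : F ⊆ N := (Finset.filter_subset _ _).trans (Finset.filter_subset _ _)
  have hFsubD : ∀ J ∈ F, J ⊆ D := by
    intro J hJ
    rw [hF, Finset.mem_filter] at hJ
    have hJN : J ∈ N := Finset.filter_subset _ _ hJ.1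
    have hJB : J ∈ B := (Finset.mem_sdiff.mp (Finset.mem_filter.mp hJN).1).1
    have hJR : J ∈ restrictB B T := mem_restrictB.mpr ⟨hJB, hNsubT J hJN⟩
    exact subset_max_of_inter (restrict_closed hB T) hJR hD hJ.2
  have hDsubF : D ⊆ F.sup id := by
    intro i hiD
    have hiT : i ∈ T := (comp_mem hD).2 hiD
    obtain ⟨I, hcI, hiI⟩ := (hmemT i).mp hiT
    obtain ⟨J, hJmax, hIJ⟩ := exists_max_above N ((hmemN I).mpr hcI)
    have hJF : J ∈ F := by
      rw [hF, Finset.mem_filter]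
      exact ⟨hJmax, ⟨i, Finset.mem_inter.mpr ⟨hIJ hiI, hiD⟩⟩⟩
    exact (Finset.le_sup (f := id) hJF) (hIJ hiI)
  have hsupD : F.sup id = D := le_antisymm (Finset.sup_le fun J hJ => hFsubD J hJ) hDsubF
  have hDB : D ∈ B := (comp_mem hD).1
  have hDne : D.Nonempty := (hB.1 D hDB).1
  have hFne : F.Nonempty := by
    obtain ⟨i, hiD⟩ := hDne
    obtain ⟨J, hJF, _⟩ := Finset.mem_sup.mp (hDsubF hiD)
    exact ⟨J, hJF⟩
  rcases Nat.lt_or_ge F.card 2 with hc | hc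
  · have hc1 : F.card = 1 := by
      have := Finset.card_pos.mpr hFne
      omega
    obtain ⟨J, hJ⟩ := Finset.card_eq_one.mp hc1
    have hsupJ : F.sup id = J := by rw [hJ, Finset.sup_singleton]; rfl
    have hJN : J ∈ N := hFN (by rw [hJ]; exact Finset.mem_singleton_self J)
    rw [hsupJ] at hsupD
    exact (hmemN D).mp (hsupD ▸ hJN)
  · exfalso
    have hanti : ∀ I ∈ F, ∀ J ∈ F, I ≠ J → ¬ I ⊆ J := by
      intro I hI J hJ hne hsub
      have hImax : I ∈ buildingMax N := (Finset.mem_filter.mp hI).1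
      exact hne ((Finset.mem_filter.mp hImax).2 J (hFN hJ) hsub)
    have := hN.2 F hFN hc hanti
    rw [hsupD] at this
    exact this hDB

lemma nested_mono {B N M : Finset (Finset V)} (h : IsNested B N) (hsub : M ⊆ N) :
    IsNested B M :=
  ⟨hsub.trans h.1, fun F hF => h.2 F (hF.trans hsub)⟩

lemma nat_expansion_unique {B : Finset (Finset V)} (hB : IsBuilding Finset.univ B) :
    ∀ (n : ℕ) (c c' : Finset V → ℕ),
    (∑ i, natSum B c i) = n →
    (∀ I, c I ≠ 0 → I ∈ B \ buildingMax B) →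
    IsNested B ((B \ buildingMax B).filter (fun I => c I ≠ 0)) →
    (∀ I, c' I ≠ 0 → I ∈ B \ buildingMax B) →
    IsNested B ((B \ buildingMax B).filter (fun I => c' I ≠ 0)) →
    (∀ i, natSum B c i = natSum B c' i) →
    c = c' := by
  intro n
  induction n using Nat.strong_induction_on with
  | _ n ih =>
  intro c c' hn hs hNc hs' hNc' heq
  have hfun : natSum B c = natSum B c' := funext heq
  by_cases h0 : ∀ i, natSum B c i = 0
  · have hzero : ∀ (d : Finset V → ℕ), (∀ I, d I ≠ 0 → I ∈ B \ buildingMax B) →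
        (∀ i, natSum B d i = 0) → ∀ I, d I = 0 := by
      intro d hd h0 I
      by_contra hc
      have hIB : I ∈ B := (Finset.mem_sdiff.mp (hd I hc)).1
      obtain ⟨i, hiI⟩ := (hB.1 I hIB).1
      exact (mem_suppT hd i).mpr ⟨I, hc, hiI⟩ (h0 i)
    funext I
    rw [hzero c hs h0 I, hzero c' hs' (fun i => by rw [← heq i]; exact h0 i) I]
  · push_neg at h0
    obtain ⟨i₀, hi₀⟩ := h0
    set T := Finset.univ.filter (fun i => natSum B c i ≠ 0) with hT
    have hmemT : ∀ i, i ∈ T ↔ natSum B c i ≠ 0 := by intro i; simp [hT]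
    have hTinv : ∀ C ∈ buildingMax B, ¬ C ⊆ T := by
      intro C hC hsub
      obtain ⟨i, hiC, hiI⟩ := proper_union hB hNc hC
      have : natSum B c i = 0 := by
        by_contra hc
        obtain ⟨I, hcI, hiI'⟩ := (mem_suppT hs i).mp hc
        exact hiI I (Finset.mem_filter.mpr ⟨hs I hcI, hcI⟩) hiI'
      exact (hmemT i).mp (hsub hiC) this
    set K := buildingMax (restrictB B T) with hK
    have hKc : ∀ D ∈ K, c D ≠ 0 := fun D hD => comp_pos hB hs hNc (hT ▸ hD)
    have hKc' : ∀ D ∈ K, c' D ≠ 0 := by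
      intro D hD
      apply comp_pos hB hs' hNc'
      rw [← hfun]
      exact hT ▸ hD
    set c₁ : Finset V → ℕ := fun I => c I - (if I ∈ K then 1 else 0) with hc₁
    set c'₁ : Finset V → ℕ := fun I => c' I - (if I ∈ K then 1 else 0) with hc'₁
    have hceq : c = fun I => c₁ I + (if I ∈ K then 1 else 0) := by
      funext I
      simp only [hc₁]
      by_cases hIK : I ∈ K
      · have := hKc I hIK
        simp only [if_pos hIK]
        omega
      · simp [hIK]
    have hceq' : c' = fun I => c'₁ I + (if I ∈ K then 1 else 0) := by
      funext I
      simp only [hc'₁]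
      by_cases hIK : I ∈ K
      · have := hKc' I hIK
        simp only [if_pos hIK]
        omega
      · simp [hIK]
    have hdec : ∀ i, natSum B c i = natSum B c₁ i + (if i ∈ T then 1 else 0) := by
      intro i
      conv_lhs => rw [hceq]
      rw [natSum_add, hK]
      rw [natSum_delta hB hTinv]
    have hdec' : ∀ i, natSum B c' i = natSum B c'₁ i + (if i ∈ T then 1 else 0) := by
      intro i
      conv_lhs => rw [hceq']
      rw [natSum_add, hK]
      rw [natSum_delta hB hTinv]
    have hm : (∑ i, natSum B c₁ i) < n := by
      rw [← hn]
      apply Finset.sum_lt_sum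
      · intro i _
        have := hdec i
        omega
      · refine ⟨i₀, Finset.mem_univ _, ?_⟩
        have := hdec i₀
        have hi₀T : i₀ ∈ T := (hmemT i₀).mpr hi₀
        rw [if_pos hi₀T] at this
        omega
    have hs₁ : ∀ I, c₁ I ≠ 0 → I ∈ B \ buildingMax B := by
      intro I hI
      apply hs
      simp only [hc₁] at hI
      omega
    have hs'₁ : ∀ I, c'₁ I ≠ 0 → I ∈ B \ buildingMax B := by
      intro I hI
      apply hs'
      simp only [hc'₁] at hI
      omega
    have hsub₁ : (B \ buildingMax B).filter (fun I => c₁ I ≠ 0) ⊆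
        (B \ buildingMax B).filter (fun I => c I ≠ 0) := by
      intro I hI
      rw [Finset.mem_filter] at *
      refine ⟨hI.1, ?_⟩
      have := hI.2
      simp only [hc₁] at this
      omega
    have hsub'₁ : (B \ buildingMax B).filter (fun I => c'₁ I ≠ 0) ⊆
        (B \ buildingMax B).filter (fun I => c' I ≠ 0) := by
      intro I hI
      rw [Finset.mem_filter] at *
      refine ⟨hI.1, ?_⟩
      have := hI.2
      simp only [hc'₁] at this
      omega
    have heq₁ : ∀ i, natSum B c₁ i = natSum B c'₁ i := by
      intro i
      have h1 := hdec i
      have h2 := hdec' i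
      have h3 := heq i
      omega
    have := ih _ hm c₁ c'₁ rfl hs₁ (nested_mono hNc hsub₁) hs'₁ (nested_mono hNc' hsub'₁) heq₁
    rw [hceq, hceq', this]

lemma restrictB_univ {B : Finset (Finset V)} : restrictB B (Finset.univ : Finset V) = B := by
  rw [restrictB]
  apply Finset.filter_true_of_mem
  intro I _
  exact Finset.subset_univ I

lemma cover_univ {B : Finset (Finset V)} (hB : IsBuilding Finset.univ B) (i : V) :
    ∃ C ∈ buildingMax B, i ∈ C := by
  have := comps_cover hB (Finset.mem_univ i)
  rwa [restrictB_univ] at this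

lemma realSum_eq (B : Finset (Finset V)) (c : Finset V → ℕ) (i : V) :
    (∑ I ∈ B \ buildingMax B, (c I : ℝ) • eVec I) i = (natSum B c i : ℝ) := by
  rw [Finset.sum_apply, natSum, Nat.cast_sum]
  apply Finset.sum_congr rfl
  intro I _
  simp only [Pi.smul_apply, smul_eq_mul, eVec]
  split <;> simp

lemma compSpan_const {B : Finset (Finset V)} (hB : IsBuilding Finset.univ B) {x : V → ℝ}
    (hx : x ∈ compSpan B) :
    ∀ C ∈ buildingMax B, ∀ i ∈ C, ∀ j ∈ C, x i = x j := by
  refine Submodule.span_induction ?_ ?_ ?_ ?_ hx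
  · rintro y ⟨C', hC', rfl⟩ C hC i hi j hj
    by_cases hCC : C' = C
    · subst hCC
      simp only [eVec, if_pos hi, if_pos hj]
    · have hni : i ∉ C' := fun h => hCC (max_eq_of_inter hB.2.1 hC' hC ⟨i, Finset.mem_inter.mpr ⟨h, hi⟩⟩)
      have hnj : j ∉ C' := fun h => hCC (max_eq_of_inter hB.2.1 hC' hC ⟨j, Finset.mem_inter.mpr ⟨h, hj⟩⟩)
      simp only [eVec, if_neg hni, if_neg hnj]
  · intro C hC i hi j hj
    rfl
  · intro y z _ _ hy hz C hC i hi j hj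
    simp only [Pi.add_apply]
    rw [hy C hC i hi j hj, hz C hC i hi j hj]
  · intro a y _ hy C hC i hi j hj
    simp only [Pi.smul_apply]
    rw [hy C hC i hi j hj]


theorem nested_expansion (B : Finset (Finset V))
    (hB : IsBuilding Finset.univ B) (v : (V → ℝ) ⧸ compSpan B)
    (hv : ∃ w : V → ℤ, (compSpan B).mkQ (fun i => (w i : ℝ)) = v) :
    ∃! c : Finset V → ℕ,
      (∀ I, c I ≠ 0 → I ∈ B \ buildingMax B) ∧
      IsNested B ((B \ buildingMax B).filter (fun I => c I ≠ 0)) ∧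
      (compSpan B).mkQ (∑ I ∈ B \ buildingMax B, (c I : ℝ) • eVec I) = v := by
  classical
  obtain ⟨w, hw⟩ := hv
  set mval : Finset V → ℤ := fun C => if h : C.Nonempty then C.inf' h w else 0 with hmval
  set zshift : V → ℤ := fun i => ∑ C ∈ buildingMax B, (if i ∈ C then mval C else 0) with hzs
  have hshift : ∀ C ∈ buildingMax B, ∀ i ∈ C, zshift i = mval C := by
    intro C hC i hiC
    rw [hzs]
    dsimp only
    rw [Finset.sum_eq_single_of_mem C hC]
    · rw [if_pos hiC]
    · intro D hD hne
      exact if_neg (fun hiD => hne (max_eq_of_inter hB.2.1 hD hC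
        ⟨i, Finset.mem_inter.mpr ⟨hiD, hiC⟩⟩))
  have hle : ∀ i, zshift i ≤ w i := by
    intro i
    obtain ⟨C, hC, hiC⟩ := cover_univ hB i
    rw [hshift C hC i hiC]
    have hCB : C ∈ B := (Finset.mem_filter.mp hC).1
    have hCne := (hB.1 C hCB).1
    rw [hmval]
    dsimp only
    rw [dif_pos hCne]
    exact Finset.inf'_le w hiC
  set u : V → ℕ := fun i => (w i - zshift i).toNat with hu
  have hucast : ∀ i, (u i : ℤ) = w i - zshift i := by
    intro i
    rw [hu]
    dsimp only
    rw [Int.toNat_of_nonneg (by have := hle i; omega)]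
  have hinv : ∀ C ∈ buildingMax B, ∃ i ∈ C, u i = 0 := by
    intro C hC
    have hCB : C ∈ B := (Finset.mem_filter.mp hC).1
    have hCne := (hB.1 C hCB).1
    obtain ⟨i, hiC, hival⟩ := Finset.exists_mem_eq_inf' hCne w
    refine ⟨i, hiC, ?_⟩
    have h1 := hshift C hC i hiC
    have h2 : mval C = w i := by rw [hmval]; dsimp only; rw [dif_pos hCne]; exact hival
    have h3 := hucast i
    omega
  obtain ⟨c, hsupp, hnest, hsum⟩ := exists_nat_expansion hB (∑ i, u i) u rfl hinv
  have hNested : IsNested B ((B \ buildingMax B).filter (fun I => c I ≠ 0)) := by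
    constructor
    · exact Finset.filter_subset _ _
    · intro F hF hcard hanti
      exact hnest F (fun I hI => (Finset.mem_filter.mp (hF hI)).2) hcard hanti
  have hmkQ : (compSpan B).mkQ (∑ I ∈ B \ buildingMax B, (c I : ℝ) • eVec I) = v := by
    rw [← hw, Submodule.mkQ_apply, Submodule.mkQ_apply, Submodule.Quotient.eq]
    have hdiff : (∑ I ∈ B \ buildingMax B, (c I : ℝ) • eVec I) - (fun i => (w i : ℝ))
        = ∑ C ∈ buildingMax B, (-(mval C : ℝ)) • eVec C := by
      funext i
      rw [Pi.sub_apply, realSum_eq, hsum, Finset.sum_apply]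
      have hR : ∑ C ∈ buildingMax B, ((-(mval C : ℝ)) • eVec C) i
          = -((zshift i : ℤ) : ℝ) := by
        rw [hzs]
        dsimp only
        push_cast
        rw [← Finset.sum_neg_distrib]
        apply Finset.sum_congr rfl
        intro C _
        simp only [Pi.smul_apply, smul_eq_mul, eVec]
        split <;> simp
      rw [hR]
      have h3 := hucast i
      have : ((u i : ℤ) : ℝ) = ((w i - zshift i : ℤ) : ℝ) := by rw [h3]
      push_cast at this
      rw [this]
      ring
    rw [hdiff]
    apply Submodule.sum_mem
    intro C hC
    apply Submodule.smul_mem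
    apply Submodule.subset_span
    exact ⟨C, hC, rfl⟩
  have hsupp1 : ∀ I, c I ≠ 0 → I ∈ B \ buildingMax B := fun I hI => (hsupp I hI).1
  have hzeroAt : ∀ (d : Finset V → ℕ), (∀ I, d I ≠ 0 → I ∈ B \ buildingMax B) →
      IsNested B ((B \ buildingMax B).filter (fun I => d I ≠ 0)) →
      ∀ C ∈ buildingMax B, ∃ i ∈ C, natSum B d i = 0 := by
    intro d hd1 hd2 C hC
    obtain ⟨i, hiC, hiI⟩ := proper_union hB hd2 hC
    refine ⟨i, hiC, ?_⟩
    by_contra hc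
    obtain ⟨I, hcI, hiI'⟩ := (mem_suppT hd1 i).mp hc
    exact hiI I (Finset.mem_filter.mpr ⟨hd1 I hcI, hcI⟩) hiI'
  refine ⟨c, ⟨hsupp1, hNested, hmkQ⟩, ?_⟩
  rintro y ⟨hy1, hy2, hy3⟩
  have hd : (∑ I ∈ B \ buildingMax B, (y I : ℝ) • eVec I)
      - (∑ I ∈ B \ buildingMax B, (c I : ℝ) • eVec I) ∈ compSpan B := by
    rw [← Submodule.Quotient.eq]
    have h1 := hy3
    have h2 := hmkQ
    rw [Submodule.mkQ_apply] at h1 h2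
    rw [h1, h2]
  have hconst := compSpan_const hB hd
  have hnatEq : ∀ i, natSum B y i = natSum B c i := by
    intro i
    obtain ⟨C, hC, hiC⟩ := cover_univ hB i
    obtain ⟨i₀, hi₀C, hz₀⟩ := hzeroAt y hy1 hy2 C hC
    obtain ⟨i₁, hi₁C, hz₁⟩ := hzeroAt c hsupp1 hNested C hC
    have hdapp : ∀ j, ((∑ I ∈ B \ buildingMax B, (y I : ℝ) • eVec I)
        - (∑ I ∈ B \ buildingMax B, (c I : ℝ) • eVec I)) j
        = (natSum B y j : ℝ) - (natSum B c j : ℝ) := by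
      intro j
      rw [Pi.sub_apply, realSum_eq, realSum_eq]
    have e1 := hconst C hC i₀ hi₀C i₁ hi₁C
    have e2 := hconst C hC i hiC i₀ hi₀C
    rw [hdapp, hdapp] at e1
    rw [hdapp, hdapp] at e2
    rw [hz₀, hz₁] at e1
    rw [hz₀] at e2
    have hb : (0:ℝ) ≤ (natSum B c i₀ : ℝ) := Nat.cast_nonneg _
    have ha : (0:ℝ) ≤ (natSum B y i₁ : ℝ) := Nat.cast_nonneg _
    have hby : (natSum B c i₀ : ℝ) = 0 := by push_cast at e1 ⊢; linarith
    have : (natSum B y i : ℝ) = (natSum B c i : ℝ) := by push_cast at e2 ⊢; linarith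
    exact_mod_cast this
  exact nat_expansion_unique hB (∑ i, natSum B y i) y c rfl hy1 hy2 hsupp1 hNested hnatEq
end

section
/- The cones R_{≥0}N spanned by {ē_I : I ∈ N} for nested sets N form a complete simplicial fan in V: any two such cones intersect in the cone of the common face, R_{≥0}N_1 ∩ R_{≥0}N_2 = R_{≥0}(N_1 ∩ N_2), and the union of all these cones is V. -/
open Finset

variable {V : Type*} [Fintype V] [DecidableEq V]

/-- The cone `R_{≥0} N` spanned by the vectors `ē_I`, `I ∈ N`. -/
def nestedCone (B : Finset (Finset V)) (N : Finset (Finset V)) :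
    Set ((V → ℝ) ⧸ compSpan B) :=
  {v | ∃ c : Finset V → ℝ, (∀ I, 0 ≤ c I) ∧
    v = (compSpan B).mkQ (∑ I ∈ N, c I • eVec I)}


section Aux
variable {B : Finset (Finset V)}

/-- value min over I, with junk value 0 for empty I -/
noncomputable def mval (x : V → ℝ) (I : Finset V) : ℝ :=
  if h : I.Nonempty then I.inf' h x else 0

lemma mval_le {x : V → ℝ} {I : Finset V} {i : V} (hi : i ∈ I) : mval x I ≤ x i := by
  rw [mval, dif_pos ⟨i, hi⟩]; exact Finset.inf'_le _ hi

lemma le_mval {x : V → ℝ} {I : Finset V} (hI : I.Nonempty) {a : ℝ}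
    (h : ∀ i ∈ I, a ≤ x i) : a ≤ mval x I := by
  rw [mval, dif_pos hI]; exact Finset.le_inf' _ _ h

lemma mval_mono {x : V → ℝ} {I K : Finset V} (hI : I.Nonempty) (hIK : I ⊆ K) :
    mval x K ≤ mval x I := by
  rw [mval, mval, dif_pos hI, dif_pos (hI.mono hIK)]
  exact Finset.inf'_mono x hIK hI

lemma exists_mval {x : V → ℝ} {I : Finset V} (hI : I.Nonempty) :
    ∃ i ∈ I, x i = mval x I := by
  rw [mval, dif_pos hI]
  obtain ⟨i, hi, h⟩ := Finset.exists_mem_eq_inf' hI x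
  exact ⟨i, hi, h.symm⟩

/-- maximal element above a given one -/
lemma maxAbove (F : Finset (Finset V)) {J : Finset V} (hJ : J ∈ F) :
    ∃ M ∈ F, J ⊆ M ∧ ∀ K ∈ F, M ⊆ K → M = K := by
  obtain ⟨M, hM, hmax⟩ := Finset.exists_max_image (F.filter (J ⊆ ·)) Finset.card
    ⟨J, Finset.mem_filter.2 ⟨hJ, Finset.Subset.refl J⟩⟩
  rw [Finset.mem_filter] at hM
  refine ⟨M, hM.1, hM.2, fun K hK hMK => Finset.eq_of_subset_of_card_le hMK ?_⟩
  exact hmax K (Finset.mem_filter.2 ⟨hK, hM.2.trans hMK⟩)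

/-- minimal element of a nonempty family -/
lemma minElt {F : Finset (Finset V)} (hF : F.Nonempty) :
    ∃ Q ∈ F, ∀ T ∈ F, ¬ T ⊂ Q := by
  obtain ⟨Q, hQ, hmin⟩ := Finset.exists_min_image F Finset.card hF
  exact ⟨Q, hQ, fun T hT hTQ => absurd (Finset.card_lt_card hTQ) (not_lt.2 (hmin T hT))⟩

end Aux
set_option linter.unusedSectionVars false

section Bld
variable {B : Finset (Finset V)} (hB : IsBuilding Finset.univ B)
include hB

lemma bld_nonempty {I : Finset V} (hI : I ∈ B) : I.Nonempty := (hB.1 I hI).1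

lemma bld_union {I J : Finset V} (hI : I ∈ B) (hJ : J ∈ B) (h : ¬ Disjoint I J) :
    I ∪ J ∈ B :=
  hB.2.1 I hI J hJ (Finset.not_disjoint_iff_nonempty_inter.1 h)

lemma max_mem_bld {C : Finset V} (hC : C ∈ buildingMax B) : C ∈ B :=
  (Finset.mem_filter.1 hC).1

lemma max_eq {C C' : Finset V} (hC : C ∈ buildingMax B) (hC' : C' ∈ buildingMax B)
    (h : ¬ Disjoint C C') : C = C' := by
  rw [buildingMax, Finset.mem_filter] at hC hC'
  have hU : C ∪ C' ∈ B := bld_union hB hC.1 hC'.1 h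
  have h1 := hC.2 _ hU Finset.subset_union_left
  have h2 := hC'.2 _ hU Finset.subset_union_right
  exact h1.trans h2.symm

lemma subset_comp {K : Finset V} (hK : K ∈ B) : ∃ C ∈ buildingMax B, K ⊆ C := by
  obtain ⟨M, hM, hKM, hmax⟩ := maxAbove B hK
  exact ⟨M, Finset.mem_filter.2 ⟨hM, hmax⟩, hKM⟩

lemma mem_comp (i : V) : ∃ C ∈ buildingMax B, i ∈ C := by
  obtain ⟨C, hC, hsub⟩ := subset_comp hB (hB.2.2 i (Finset.mem_univ i))
  exact ⟨C, hC, hsub (Finset.mem_singleton_self i)⟩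

/-- absorbing a family of sets each meeting K -/
lemma absorb {K : Finset V} (hK : K ∈ B) (D : Finset (Finset V))
    (hD : ∀ J ∈ D, J ∈ B ∧ ¬ Disjoint K J) : K ∪ D.sup id ∈ B := by
  induction D using Finset.induction_on with
  | empty => simpa using hK
  | @insert J D hJD ih =>
    have h1 : K ∪ D.sup id ∈ B := ih (fun J hJ => hD J (Finset.mem_insert_of_mem hJ))
    have h2 := hD J (Finset.mem_insert_self J D)
    have : (K ∪ D.sup id) ∪ J ∈ B := by
      apply bld_union hB h1 h2.1
      intro hdisj
      exact h2.2 (hdisj.mono_left Finset.subset_union_left)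
    have heq : (K ∪ D.sup id) ∪ J = K ∪ (insert J D).sup id := by
      rw [Finset.sup_insert]
      show (K ∪ D.sup id) ∪ J = K ∪ (J ∪ D.sup id)
      rw [Finset.union_assoc, Finset.union_comm (D.sup id) J]
    rwa [heq] at this

/-- cover dichotomy: a building set covered by disjoint building sets -/
lemma coverDich {K : Finset V} (hK : K ∈ B) (D : Finset (Finset V))
    (hDB : ∀ J ∈ D, J ∈ B)
    (hdisj : ∀ J ∈ D, ∀ J' ∈ D, J ≠ J' → Disjoint J J')
    (hcov : K ⊆ D.sup id) :
    (∃ J ∈ D, K ⊆ J) ∨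
    (∃ D' ⊆ D, 2 ≤ D'.card ∧ (∀ I ∈ D', ∀ J ∈ D', I ≠ J → ¬ I ⊆ J) ∧ D'.sup id ∈ B) := by
  classical
  set D' := D.filter (fun J => ¬ Disjoint K J) with hD'
  have hD'D : D' ⊆ D := Finset.filter_subset _ _
  have hKD' : K ⊆ D'.sup id := by
    intro a ha
    obtain ⟨J, hJ, haJ⟩ := Finset.mem_sup.1 (hcov ha)
    refine Finset.mem_sup.2 ⟨J, Finset.mem_filter.2 ⟨hJ, ?_⟩, haJ⟩
    exact fun hd => (Finset.disjoint_left.1 hd) ha haJ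
  rcases lt_or_ge D'.card 2 with hlt | hge
  · left
    interval_cases h : D'.card
    · exfalso
      obtain ⟨i, hi⟩ := bld_nonempty hB hK
      obtain ⟨J, hJ, hiJ⟩ := Finset.mem_sup.1 (hKD' hi)
      rw [Finset.card_eq_zero.1 h] at hJ
      exact absurd hJ (Finset.notMem_empty J)
    · obtain ⟨J, hJ⟩ := Finset.card_eq_one.1 h
      rw [hJ] at hKD'
      simp only [Finset.sup_singleton, id] at hKD'
      exact ⟨J, hD'D (hJ ▸ Finset.mem_singleton_self J), hKD'⟩
  · right
    refine ⟨D', hD'D, hge, ?_, ?_⟩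
    · intro I hI J hJ hIJ hsub
      have hd := hdisj I (hD'D hI) J (hD'D hJ) hIJ
      have hIne : I.Nonempty := bld_nonempty hB (hDB I (hD'D hI))
      obtain ⟨i, hi⟩ := hIne
      exact (Finset.disjoint_left.1 hd) hi (hsub hi)
    · have : K ∪ D'.sup id ∈ B := by
        apply absorb hB hK D'
        intro J hJ
        exact ⟨hDB J (hD'D hJ), (Finset.mem_filter.1 hJ).2⟩
      rwa [Finset.union_eq_right.2 hKD'] at this

end Bld

section Rep
variable {B : Finset (Finset V)} (hB : IsBuilding Finset.univ B)

lemma nested_mem_bld {N : Finset (Finset V)} (hN : IsNested B N) {I : Finset V}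
    (hI : I ∈ N) : I ∈ B := (Finset.mem_sdiff.1 (hN.1 hI)).1

lemma nested_not_max {N : Finset (Finset V)} (hN : IsNested B N) {I : Finset V}
    (hI : I ∈ N) : I ∉ buildingMax B := (Finset.mem_sdiff.1 (hN.1 hI)).2

include hB in
lemma nested_pair {N : Finset (Finset V)} (hN : IsNested B N) {I J : Finset V}
    (hI : I ∈ N) (hJ : J ∈ N) (h : ¬ Disjoint I J) : I ⊆ J ∨ J ⊆ I := by
  by_cases hIJ : I = J
  · exact Or.inl (hIJ ▸ Finset.Subset.refl I)
  by_contra hcon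
  push_neg at hcon
  have hF : ({I, J} : Finset (Finset V)) ⊆ N := by
    intro A hA
    rcases Finset.mem_insert.1 hA with h1 | h1
    · exact h1 ▸ hI
    · exact (Finset.mem_singleton.1 h1) ▸ hJ
  have hcard : 2 ≤ ({I, J} : Finset (Finset V)).card := by
    rw [Finset.card_insert_of_notMem (by simpa using hIJ), Finset.card_singleton]
  have hanti : ∀ A ∈ ({I, J} : Finset (Finset V)), ∀ A' ∈ ({I, J} : Finset (Finset V)),
      A ≠ A' → ¬ A ⊆ A' := by
    intro A hA A' hA' hne
    simp only [Finset.mem_insert, Finset.mem_singleton] at hA hA'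
    rcases hA with rfl | rfl <;> rcases hA' with rfl | rfl
    · exact absurd rfl hne
    · exact hcon.1
    · exact hcon.2
    · exact absurd rfl hne
  have hsup : ({I, J} : Finset (Finset V)).sup id = I ∪ J := by
    rw [Finset.sup_insert, Finset.sup_singleton]; rfl
  have := hN.2 _ hF hcard hanti
  rw [hsup] at this
  exact this (bld_union hB (nested_mem_bld hN hI) (nested_mem_bld hN hJ) h)

include hB in
lemma laminar {N : Finset (Finset V)} (hN : IsNested B N) {A A' : Finset V}
    (hA : A ∈ N ∪ buildingMax B) (hA' : A' ∈ N ∪ buildingMax B)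
    (h : ¬ Disjoint A A') : A ⊆ A' ∨ A' ⊆ A := by
  rcases Finset.mem_union.1 hA with h1 | h1 <;> rcases Finset.mem_union.1 hA' with h2 | h2
  · exact nested_pair hB hN h1 h2 h
  · left
    have hU : A ∪ A' ∈ B := bld_union hB (nested_mem_bld hN h1) (max_mem_bld hB h2) h
    have heq := (Finset.mem_filter.1 h2).2 _ hU Finset.subset_union_right
    rw [heq]
    exact Finset.subset_union_left
  · right
    have hU : A' ∪ A ∈ B := bld_union hB (nested_mem_bld hN h2) (max_mem_bld hB h1)
      (fun hd => h hd.symm)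
    have heq := (Finset.mem_filter.1 h1).2 _ hU Finset.subset_union_right
    rw [heq]
    exact Finset.subset_union_left
  · left
    rw [max_eq hB h1 h2 h]

lemma node_mem_bld (hB : IsBuilding Finset.univ B) {N : Finset (Finset V)} (hN : IsNested B N)
    {Q : Finset V} (hQ : Q ∈ N ∪ buildingMax B) : Q ∈ B := by
  rcases Finset.mem_union.1 hQ with h | h
  · exact nested_mem_bld hN h
  · exact max_mem_bld hB h

include hB in
lemma zconst {z : V → ℝ} (hz : z ∈ compSpan B) {C : Finset V} (hC : C ∈ buildingMax B)
    {i j : V} (hi : i ∈ C) (hj : j ∈ C) : z i = z j := by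
  let W : Submodule ℝ (V → ℝ) :=
    { carrier := {y | ∀ C ∈ buildingMax B, ∀ i ∈ C, ∀ j ∈ C, y i = y j}
      add_mem' := fun ha hb C hC i hi j hj => by
        simp only [Pi.add_apply]; rw [ha C hC i hi j hj, hb C hC i hi j hj]
      zero_mem' := fun C hC i hi j hj => rfl
      smul_mem' := fun r y hy C hC i hi j hj => by
        simp only [Pi.smul_apply]; rw [hy C hC i hi j hj] }
  have hle : compSpan B ≤ W := by
    rw [compSpan, Submodule.span_le]
    rintro y ⟨C', hC', rfl⟩ C hC i hi j hj
    show (if i ∈ C' then (1:ℝ) else 0) = (if j ∈ C' then 1 else 0)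
    by_cases hCC : C' = C
    · subst hCC; rw [if_pos hi, if_pos hj]
    · have hd : Disjoint C C' := by
        by_contra hnd
        exact hCC (max_eq hB hC' hC (fun hd => hnd hd.symm))
      rw [if_neg (fun h => (Finset.disjoint_left.1 hd) hi h),
        if_neg (fun h => (Finset.disjoint_left.1 hd) hj h)]
  exact hle hz C hC i hi j hj

lemma xval {N : Finset (Finset V)} {c : Finset V → ℝ} {z x : V → ℝ}
    (hx : x = ∑ I ∈ N, c I • eVec I + z) (i : V) :
    x i = (∑ I ∈ N.filter (fun I => i ∈ I), c I) + z i := by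
  rw [hx]
  simp only [Pi.add_apply, Finset.sum_apply, Pi.smul_apply, eVec, smul_eq_mul,
    mul_ite, mul_one, mul_zero]
  rw [Finset.sum_filter]

include hB in
lemma rep_lower {N : Finset (Finset V)} {c : Finset V → ℝ} {z x : V → ℝ}
    (hN : IsNested B N) (hc : ∀ I, 0 ≤ c I) (hz : z ∈ compSpan B)
    (hx : x = ∑ I ∈ N, c I • eVec I + z) {Q : Finset V} (hQB : Q ∈ B) {i : V} (hi : i ∈ Q) :
    (∑ J ∈ N.filter (fun J => Q ⊆ J), c J) + z i ≤ mval x Q := by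
  obtain ⟨C, hC, hQC⟩ := subset_comp hB hQB
  apply le_mval (bld_nonempty hB hQB)
  intro j hj
  rw [xval hx j]
  have hzz : z i = z j := zconst hB hz hC (hQC hi) (hQC hj)
  rw [hzz]
  apply add_le_add_left
  apply Finset.sum_le_sum_of_subset_of_nonneg
  · intro J hJ
    rw [Finset.mem_filter] at hJ ⊢
    exact ⟨hJ.1, hJ.2 hj⟩
  · exact fun J _ _ => hc J

include hB in
lemma rep_point {N : Finset (Finset V)} {c : Finset V → ℝ} {z x : V → ℝ}
    (hN : IsNested B N) (hc : ∀ I, 0 ≤ c I) (hz : z ∈ compSpan B)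
    (hx : x = ∑ I ∈ N, c I • eVec I + z) {Q I : Finset V}
    (hQ : Q ∈ N ∪ buildingMax B) (hIB : I ∈ B) (hIQ : I ⊆ Q)
    (hmin : ∀ T ∈ N ∪ buildingMax B, I ⊆ T → ¬ T ⊂ Q) :
    ∃ i ∈ I, x i = (∑ J ∈ N.filter (fun J => Q ⊆ J), c J) + z i := by
  classical
  set D := N.filter (fun J => J ⊂ Q) with hD
  set Dm := D.filter (fun M => ∀ K ∈ D, M ⊆ K → M = K) with hDm
  have hDmN : ∀ M ∈ Dm, M ∈ N := fun M hM =>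
    (Finset.mem_filter.1 (Finset.mem_filter.1 hM).1).1
  have hDm_pair : ∀ M₁ ∈ Dm, ∀ M₂ ∈ Dm, M₁ ≠ M₂ → Disjoint M₁ M₂ := by
    intro M₁ h1 M₂ h2 hne
    by_contra hnd
    rcases nested_pair hB hN (hDmN _ h1) (hDmN _ h2) hnd with hs | hs
    · exact hne ((Finset.mem_filter.1 h1).2 M₂ (Finset.mem_filter.1 h2).1 hs)
    · exact hne ((Finset.mem_filter.1 h2).2 M₁ (Finset.mem_filter.1 h1).1 hs).symm
  have hnotcov : ¬ I ⊆ Dm.sup id := by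
    intro hcov
    rcases coverDich hB hIB Dm (fun J hJ => nested_mem_bld hN (hDmN _ hJ)) hDm_pair hcov with
      ⟨J, hJ, hIJ⟩ | ⟨D', hD'sub, hcard, hanti, hsupB⟩
    · exact hmin J (Finset.mem_union_left _ (hDmN _ hJ)) hIJ
        (Finset.mem_filter.1 (Finset.mem_filter.1 hJ).1).2
    · exact hN.2 D' (fun A hA => hDmN _ (hD'sub hA)) hcard hanti hsupB
  obtain ⟨i, hiI, hiDm⟩ := Finset.not_subset.1 hnotcov
  refine ⟨i, hiI, ?_⟩
  rw [xval hx i]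
  congr 1
  apply Finset.sum_congr _ (fun _ _ => rfl)
  ext J
  rw [Finset.mem_filter, Finset.mem_filter]
  constructor
  · rintro ⟨hJN, hiJ⟩
    refine ⟨hJN, ?_⟩
    have hnd : ¬ Disjoint J Q := fun hd => (Finset.disjoint_left.1 hd) hiJ (hIQ hiI)
    rcases laminar hB hN (Finset.mem_union_left _ hJN) hQ hnd with hs | hs
    · rcases eq_or_ne J Q with rfl | hne
      · exact Finset.Subset.refl _
      · exfalso
        have hJD : J ∈ D := Finset.mem_filter.2 ⟨hJN, ⟨hs, fun h => hne (Finset.Subset.antisymm hs h)⟩⟩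
        obtain ⟨M, hMD, hJM, hMmax⟩ := maxAbove D hJD
        have hMDm : M ∈ Dm := Finset.mem_filter.2 ⟨hMD, hMmax⟩
        exact hiDm (Finset.mem_sup.2 ⟨M, hMDm, hJM hiJ⟩)
    · exact hs
  · rintro ⟨hJN, hQJ⟩
    exact ⟨hJN, hQJ (hIQ hiI)⟩

end Rep

section BLem
variable {B : Finset (Finset V)} (hB : IsBuilding Finset.univ B)
include hB

lemma lemB1 {N : Finset (Finset V)} {c : Finset V → ℝ} {z x : V → ℝ}
    (hN : IsNested B N) (hc : ∀ I, 0 ≤ c I) (hz : z ∈ compSpan B)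
    (hx : x = ∑ I ∈ N, c I • eVec I + z) {I K : Finset V}
    (hI : I ∈ N) (hKB : K ∈ B) (hIK : I ⊂ K) :
    mval x K + c I ≤ mval x I := by
  classical
  have hIB : I ∈ B := nested_mem_bld hN hI
  obtain ⟨C, hC, hKC⟩ := subset_comp hB hKB
  have hGne : ((N ∪ buildingMax B).filter (fun T => K ⊆ T)).Nonempty :=
    ⟨C, Finset.mem_filter.2 ⟨Finset.mem_union_right _ hC, hKC⟩⟩
  obtain ⟨Q, hQG, hQmin⟩ := minElt hGne
  rw [Finset.mem_filter] at hQG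
  obtain ⟨hQnode, hKQ⟩ := hQG
  have hmin : ∀ T ∈ N ∪ buildingMax B, K ⊆ T → ¬ T ⊂ Q := fun T hT hKT =>
    hQmin T (Finset.mem_filter.2 ⟨hT, hKT⟩)
  obtain ⟨i, hiK, hxi⟩ := rep_point hB hN hc hz hx hQnode hKB hKQ hmin
  have h1 : mval x K ≤ x i := mval_le hiK
  have h4 : x i + c I ≤ mval x I := by
    apply le_mval (bld_nonempty hB hIB)
    intro j hj
    rw [xval hx j, hxi]
    have hz' : z i = z j := zconst hB hz hC (hKC hiK) (hKC (hIK.1 hj))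
    have hnotmem : I ∉ N.filter (fun J => Q ⊆ J) := by
      rw [Finset.mem_filter]
      rintro ⟨-, hQI⟩
      exact (lt_irrefl I) (lt_of_lt_of_le hIK (hKQ.trans hQI))
    have hsub : insert I (N.filter (fun J => Q ⊆ J)) ⊆ N.filter (fun J => j ∈ J) := by
      intro J hJ
      rcases Finset.mem_insert.1 hJ with rfl | hJ'
      · exact Finset.mem_filter.2 ⟨hI, hj⟩
      · rw [Finset.mem_filter] at hJ' ⊢
        exact ⟨hJ'.1, hJ'.2 (hKQ (hIK.1 hj))⟩
    have hss := Finset.sum_le_sum_of_subset_of_nonneg hsub (fun J _ _ => hc J)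
    rw [Finset.sum_insert hnotmem] at hss
    linarith
  linarith

lemma lemB2 {N : Finset (Finset V)} {c : Finset V → ℝ} {z x : V → ℝ}
    (hN : IsNested B N) (hc : ∀ I, 0 ≤ c I) (hz : z ∈ compSpan B)
    (hx : x = ∑ I ∈ N, c I • eVec I + z) {I : Finset V}
    (hIB : I ∈ B) (hImax : I ∉ buildingMax B) (hIN : I ∉ N) :
    ∃ K ∈ B, I ⊂ K ∧ mval x I ≤ mval x K := by
  classical
  obtain ⟨C, hC, hIC⟩ := subset_comp hB hIB
  have hGne : ((N ∪ buildingMax B).filter (fun T => I ⊆ T)).Nonempty :=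
    ⟨C, Finset.mem_filter.2 ⟨Finset.mem_union_right _ hC, hIC⟩⟩
  obtain ⟨Q, hQG, hQmin⟩ := minElt hGne
  rw [Finset.mem_filter] at hQG
  obtain ⟨hQnode, hIQ⟩ := hQG
  have hQB := node_mem_bld hB hN hQnode
  have hne : I ≠ Q := by
    rintro rfl
    rcases Finset.mem_union.1 hQnode with h | h
    · exact hIN h
    · exact hImax h
  have hIQs : I ⊂ Q := Finset.ssubset_iff_subset_ne.2 ⟨hIQ, hne⟩
  have hmin : ∀ T ∈ N ∪ buildingMax B, I ⊆ T → ¬ T ⊂ Q := fun T hT hIT =>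
    hQmin T (Finset.mem_filter.2 ⟨hT, hIT⟩)
  obtain ⟨i, hiI, hxi⟩ := rep_point hB hN hc hz hx hQnode hIB hIQ hmin
  refine ⟨Q, hQB, hIQs, ?_⟩
  have h1 : mval x I ≤ x i := mval_le hiI
  have h2 : x i ≤ mval x Q := by
    rw [hxi]
    exact rep_lower hB hN hc hz hx hQB (hIQ hiI)
  linarith

lemma lemU {N₁ N₂ : Finset (Finset V)} {c d : Finset V → ℝ}
    (hN₁ : IsNested B N₁) (hN₂ : IsNested B N₂)
    (hc : ∀ I, 0 ≤ c I) (hd : ∀ I, 0 ≤ d I) {z : V → ℝ} (hz : z ∈ compSpan B)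
    (h : (∑ I ∈ N₁, c I • eVec I) = (∑ I ∈ N₂, d I • eVec I) + z)
    {I : Finset V} (hI : I ∈ N₁) (hIN₂ : I ∉ N₂) : c I = 0 := by
  set x := ∑ I ∈ N₁, c I • eVec I with hxdef
  have hx1 : x = ∑ I ∈ N₁, c I • eVec I + 0 := by rw [add_zero]
  have hz0 : (0 : V → ℝ) ∈ compSpan B := Submodule.zero_mem _
  have hIB : I ∈ B := nested_mem_bld hN₁ hI
  have hImax : I ∉ buildingMax B := nested_not_max hN₁ hI
  obtain ⟨K, hKB, hIK, hmm⟩ := lemB2 hB hN₂ hd hz h hIB hImax hIN₂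
  have hb1 := lemB1 hB hN₁ hc hz0 hx1 hI hKB hIK
  have := hc I
  linarith

end BLem

section Exist
variable {B : Finset (Finset V)}

open scoped Classical in
/-- points strictly above the minimum of their component -/
noncomputable def Apos (B : Finset (Finset V)) (x : V → ℝ) : Finset V :=
  Finset.univ.filter (fun i => ∃ C ∈ buildingMax B, i ∈ C ∧ mval x C < x i)

lemma mem_Apos {x : V → ℝ} {i : V} :
    i ∈ Apos B x ↔ ∃ C ∈ buildingMax B, i ∈ C ∧ mval x C < x i := by
  classical
  simp [Apos]

lemma notApos {x : V → ℝ} {C : Finset V} (hC : C ∈ buildingMax B) {i : V}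
    (hiC : i ∈ C) (hiA : i ∉ Apos B x) : x i = mval x C := by
  have h1 : mval x C ≤ x i := mval_le hiC
  have h2 : ¬ mval x C < x i := fun h => hiA (mem_Apos.2 ⟨C, hC, hiC, h⟩)
  linarith

lemma nested_empty : IsNested B (∅ : Finset (Finset V)) := by
  constructor
  · exact Finset.empty_subset _
  · intro F hF hcard _
    rw [Finset.subset_empty] at hF
    subst hF
    simp at hcard

variable (hB : IsBuilding Finset.univ B)
include hB

lemma comp_unique {C C' : Finset V} (hC : C ∈ buildingMax B) (hC' : C' ∈ buildingMax B)
    {i : V} (hi : i ∈ C) (hi' : i ∈ C') : C = C' :=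
  max_eq hB hC hC' (fun hd => (Finset.disjoint_left.1 hd) hi hi')

/-- the component containing a set -/
def compIn (B : Finset (Finset V)) (F : Finset V) : Finset V :=
  ((buildingMax B).filter (fun C => ¬ Disjoint C F)).sup id

lemma compIn_eq {F C : Finset V} (hF : F.Nonempty) (hC : C ∈ buildingMax B)
    (hFC : F ⊆ C) : compIn B F = C := by
  have hfe : (buildingMax B).filter (fun C' => ¬ Disjoint C' F) = {C} := by
    ext C'
    rw [Finset.mem_filter, Finset.mem_singleton]
    constructor
    · rintro ⟨hC', hnd⟩
      exact max_eq hB hC' hC (fun hd => hnd (hd.mono_right hFC))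
    · rintro rfl
      obtain ⟨a, ha⟩ := hF
      exact ⟨hC, fun hd => (Finset.disjoint_right.1 hd) ha (hFC ha)⟩
  rw [compIn, hfe, Finset.sup_singleton]
  rfl

lemma apos_empty_mem (x : V → ℝ) (h : Apos B x = ∅) : x ∈ compSpan B := by
  have hx : x = ∑ C ∈ buildingMax B, mval x C • eVec C := by
    funext i
    obtain ⟨C₀, hC₀, hiC₀⟩ := mem_comp hB i
    have : (∑ C ∈ buildingMax B, mval x C • eVec C) i
        = ∑ C ∈ buildingMax B, mval x C * (if i ∈ C then 1 else 0) := by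
      simp [eVec]
    rw [this, Finset.sum_eq_single C₀]
    · rw [if_pos hiC₀, mul_one]
      exact notApos hC₀ hiC₀ (by rw [h]; exact Finset.notMem_empty i)
    · intro C hC hne
      rw [if_neg (fun hiC => hne (comp_unique hB hC hC₀ hiC hiC₀)), mul_zero]
    · intro habs
      exact absurd hC₀ habs
  rw [hx]
  apply Submodule.sum_mem
  intro C hC
  exact Submodule.smul_mem _ _ (Submodule.subset_span ⟨C, hC, rfl⟩)

lemma lemE : ∀ n (x : V → ℝ), (Apos B x).card ≤ n →
    ∃ (N : Finset (Finset V)) (c : Finset V → ℝ), IsNested B N ∧ (∀ I, 0 ≤ c I) ∧ (∀ I ∈ N, I ⊆ Apos B x) ∧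
      x - ∑ I ∈ N, c I • eVec I ∈ compSpan B := by
  classical
  intro n
  induction n with
  | zero =>
    intro x hcard
    refine ⟨∅, fun _ => 0, nested_empty, fun _ => le_refl 0, fun I hI => absurd hI (Finset.notMem_empty I), ?_⟩
    rw [Finset.sum_empty, sub_zero]
    exact apos_empty_mem hB x (Finset.card_eq_zero.1 (Nat.le_zero.1 hcard))
  | succ n ih =>
    intro x hcard
    by_cases hAe : Apos B x = ∅
    · refine ⟨∅, fun _ => 0, nested_empty, fun _ => le_refl 0, fun I hI => absurd hI (Finset.notMem_empty I), ?_⟩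
      rw [Finset.sum_empty, sub_zero]
      exact apos_empty_mem hB x hAe
    set A := Apos B x with hAdef
    set R := restrictB B A with hRdef
    set Fac := R.filter (fun F => ∀ K ∈ R, F ⊆ K → F = K) with hFacdef
    have hFacB : ∀ F ∈ Fac, F ∈ B :=
      fun F hF => (Finset.mem_filter.1 (Finset.mem_filter.1 hF).1).1
    have hFacA : ∀ F ∈ Fac, F ⊆ A :=
      fun F hF => (Finset.mem_filter.1 (Finset.mem_filter.1 hF).1).2
    have hFacmax : ∀ F ∈ Fac, ∀ K ∈ B, K ⊆ A → F ⊆ K → F = K := by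
      intro F hF K hK hKA hFK
      exact (Finset.mem_filter.1 hF).2 K (Finset.mem_filter.2 ⟨hK, hKA⟩) hFK
    have habove : ∀ K ∈ B, K ⊆ A → ∃ F ∈ Fac, K ⊆ F := by
      intro K hK hKA
      obtain ⟨M, hM, hKM, hmax⟩ := maxAbove R (Finset.mem_filter.2 ⟨hK, hKA⟩)
      exact ⟨M, Finset.mem_filter.2 ⟨hM, hmax⟩, hKM⟩
    have hcover : ∀ i ∈ A, ∃ F ∈ Fac, i ∈ F := by
      intro i hi
      obtain ⟨F, hF, hsub⟩ := habove {i} (hB.2.2 i (Finset.mem_univ i))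
        (Finset.singleton_subset_iff.2 hi)
      exact ⟨F, hF, hsub (Finset.mem_singleton_self i)⟩
    have hdisjF : ∀ F ∈ Fac, ∀ F' ∈ Fac, F ≠ F' → Disjoint F F' := by
      intro F hF F' hF' hne
      by_contra hnd
      have hU : F ∪ F' ∈ B := bld_union hB (hFacB F hF) (hFacB F' hF') hnd
      have hUA : F ∪ F' ⊆ A := Finset.union_subset (hFacA F hF) (hFacA F' hF')
      have h1 := hFacmax F hF _ hU hUA Finset.subset_union_left
      have h2 := hFacmax F' hF' _ hU hUA Finset.subset_union_right
      exact hne (h1.trans h2.symm)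
    -- each factor's component
    have hfc : ∀ F ∈ Fac, ∃ C ∈ buildingMax B, F ⊆ C ∧ compIn B F = C := by
      intro F hF
      obtain ⟨C, hC, hFC⟩ := subset_comp hB (hFacB F hF)
      exact ⟨C, hC, hFC, compIn_eq hB (bld_nonempty hB (hFacB F hF)) hC hFC⟩
    set δ : Finset V → ℝ := fun F => mval x F - mval x (compIn B F) with hδdef
    have hδ0 : ∀ F ∈ Fac, 0 ≤ δ F := by
      intro F hF
      obtain ⟨C, hC, hFC, hcomp⟩ := hfc F hF
      rw [hδdef]
      simp only
      rw [hcomp]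
      have := mval_mono (x := x) (bld_nonempty hB (hFacB F hF)) hFC
      linarith
    set x' : V → ℝ := x - ∑ F ∈ Fac, δ F • eVec F with hx'def
    have hx'val : ∀ i, x' i = x i - ∑ F ∈ Fac.filter (fun F => i ∈ F), δ F := by
      intro i
      have h1 : ∑ F ∈ Fac.filter (fun F => i ∈ F), δ F
          = ∑ F ∈ Fac, (if i ∈ F then δ F else 0) := Finset.sum_filter _ _
      rw [hx'def, Pi.sub_apply, h1]
      congr 1
      rw [Finset.sum_apply]
      apply Finset.sum_congr rfl
      intro F _
      simp [eVec, mul_ite]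
    have hx'notA : ∀ i, i ∉ A → x' i = x i := by
      intro i hi
      rw [hx'val]
      have : Fac.filter (fun F => i ∈ F) = ∅ := by
        rw [Finset.filter_eq_empty_iff]
        exact fun F hF hiF => hi (hFacA F hF hiF)
      rw [this, Finset.sum_empty, sub_zero]
    have hx'inF : ∀ F ∈ Fac, ∀ i ∈ F, x' i = x i - δ F := by
      intro F hF i hiF
      rw [hx'val]
      congr 1
      have : Fac.filter (fun F => i ∈ F) = {F} := by
        ext F'
        rw [Finset.mem_filter, Finset.mem_singleton]
        constructor
        · rintro ⟨hF', hiF'⟩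
          by_contra hne
          exact (Finset.disjoint_left.1 (hdisjF F' hF' F hF hne)) hiF' hiF
        · rintro rfl
          exact ⟨hF, hiF⟩
      rw [this, Finset.sum_singleton]
    -- minima of components preserved, pointwise lower bound
    have hlow : ∀ C ∈ buildingMax B, ∀ i ∈ C, mval x C ≤ x' i := by
      intro C hC i hiC
      by_cases hiA : i ∈ A
      · obtain ⟨F, hF, hiF⟩ := hcover i hiA
        obtain ⟨C', hC', hFC', hcomp⟩ := hfc F hF
        have hCC' : C' = C := comp_unique hB hC' hC (hFC' hiF) hiC
        rw [hx'inF F hF i hiF, hδdef]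
        simp only
        rw [hcomp, hCC']
        have := mval_le (x := x) hiF
        linarith
      · rw [hx'notA i hiA, notApos (x := x) hC hiC hiA]
    have hminpt : ∀ C ∈ buildingMax B, ∃ j ∈ C, x' j = mval x C ∧ j ∉ A := by
      intro C hC
      obtain ⟨j, hjC, hjm⟩ := exists_mval (x := x) (bld_nonempty hB (max_mem_bld hB hC))
      have hjA : j ∉ A := by
        rw [hAdef, mem_Apos]
        rintro ⟨C'', hC'', hjC'', hlt⟩
        rw [comp_unique hB hC'' hC hjC'' hjC] at hlt
        linarith
      exact ⟨j, hjC, by rw [hx'notA j hjA]; exact hjm, hjA⟩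
    have hmval' : ∀ C ∈ buildingMax B, mval x' C = mval x C := by
      intro C hC
      obtain ⟨j, hjC, hjval, _⟩ := hminpt C hC
      have h1 : mval x' C ≤ mval x C := hjval ▸ mval_le hjC
      have h2 : mval x C ≤ mval x' C :=
        le_mval (bld_nonempty hB (max_mem_bld hB hC)) (hlow C hC)
      linarith
    -- each factor contains a point leaving Apos
    have hfleave : ∀ F ∈ Fac, ∃ j ∈ F, j ∉ Apos B x' := by
      intro F hF
      obtain ⟨C, hC, hFC, hcomp⟩ := hfc F hF
      obtain ⟨j, hjF, hjm⟩ := exists_mval (x := x) (bld_nonempty hB (hFacB F hF))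
      refine ⟨j, hjF, ?_⟩
      rw [mem_Apos]
      rintro ⟨C'', hC'', hjC'', hlt⟩
      have hCC : C'' = C := comp_unique hB hC'' hC hjC'' (hFC hjF)
      subst hCC
      rw [hmval' _ hC'', hx'inF F hF j hjF, hjm, hδdef] at hlt
      simp only at hlt
      rw [hcomp] at hlt
      linarith
    -- Apos strictly decreases
    have hAsub : Apos B x' ⊆ A := by
      intro i hi
      rw [mem_Apos] at hi
      obtain ⟨C, hC, hiC, hlt⟩ := hi
      rw [hmval' C hC] at hlt
      by_contra hiA
      rw [hx'notA i hiA, notApos (x := x) hC hiC hiA] at hlt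
      linarith
    have hAcard : (Apos B x').card ≤ n := by
      obtain ⟨i₁, hi₁⟩ := Finset.nonempty_iff_ne_empty.2 hAe
      obtain ⟨F₀, hF₀, hi₁F₀⟩ := hcover i₁ hi₁
      obtain ⟨j₀, hj₀F, hj₀A⟩ := hfleave F₀ hF₀
      have hj₀inA : j₀ ∈ A := hFacA F₀ hF₀ hj₀F
      have hsub2 : Apos B x' ⊆ A.erase j₀ := by
        intro i hi
        exact Finset.mem_erase.2 ⟨fun h => hj₀A (h ▸ hi), hAsub hi⟩
      have := Finset.card_le_card hsub2
      rw [Finset.card_erase_of_mem hj₀inA] at this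
      omega
    obtain ⟨N', c', hN', hc', hsub', hmem'⟩ := ih x' hAcard
    -- assemble
    have hdisjFN : Disjoint Fac N' := by
      rw [Finset.disjoint_left]
      intro F hF hFN'
      obtain ⟨j, hjF, hjA⟩ := hfleave F hF
      exact hjA (hsub' F hFN' hjF)
    refine ⟨Fac ∪ N', fun I => if I ∈ Fac then δ I else c' I, ?_, ?_, ?_, ?_⟩
    · constructor
      · intro F hF
        rcases Finset.mem_union.1 hF with h | h
        · rw [Finset.mem_sdiff]
          refine ⟨hFacB F h, ?_⟩
          intro hmax
          obtain ⟨C, hC, hFC, _⟩ := hfc F h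
          obtain ⟨j, hjC, _, hjA⟩ := hminpt C hC
          have : F = C := (Finset.mem_filter.1 hmax).2 C (max_mem_bld hB hC) hFC
          exact hjA (hFacA F h (this ▸ hjC))
        · exact hN'.1 h
      · intro F' hF'sub hcard2 hanti hUB
        set U := F'.sup id with hUdef
        have hUA : U ⊆ A := by
          intro a ha
          obtain ⟨I, hI, haI⟩ := Finset.mem_sup.1 ha
          rcases Finset.mem_union.1 (hF'sub hI) with h | h
          · exact hFacA I h haI
          · exact ((hsub' I h).trans hAsub) haI
        obtain ⟨F₀, hF₀, hUF₀⟩ := habove U hUB hUA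
        by_cases hmix : ∃ G ∈ F', G ∈ Fac
        · obtain ⟨G, hGF', hGFac⟩ := hmix
          have hGU : G ⊆ U := Finset.le_sup (f := id) hGF'
          have hGF₀ : G = F₀ := by
            by_contra hne
            obtain ⟨g, hg⟩ := bld_nonempty hB (hFacB G hGFac)
            exact (Finset.disjoint_left.1 (hdisjF G hGFac F₀ hF₀ hne)) hg (hUF₀ (hGU hg))
          obtain ⟨H, hHF', hHG⟩ := Finset.exists_mem_ne (s := F') (by omega) G
          have hHU : H ⊆ U := Finset.le_sup (f := id) hHF'
          exact hanti H hHF' G hGF' hHG (hHU.trans (hGF₀ ▸ hUF₀))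
        · push_neg at hmix
          have hF'N' : F' ⊆ N' := by
            intro G hG
            rcases Finset.mem_union.1 (hF'sub hG) with h | h
            · exact absurd h (hmix G hG)
            · exact h
          exact hN'.2 F' hF'N' hcard2 hanti hUB
    · intro I
      by_cases h : I ∈ Fac
      · simpa [h] using hδ0 I h
      · simpa [h] using hc' I
    · intro I hI
      rcases Finset.mem_union.1 hI with h | h
      · exact hFacA I h
      · exact (hsub' I h).trans hAsub
    · have hsum : ∑ I ∈ Fac ∪ N', (if I ∈ Fac then δ I else c' I) • eVec I
          = (∑ F ∈ Fac, δ F • eVec F) + ∑ I ∈ N', c' I • eVec I := by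
        rw [Finset.sum_union hdisjFN]
        congr 1
        · apply Finset.sum_congr rfl
          intro F hF
          rw [if_pos hF]
        · apply Finset.sum_congr rfl
          intro I hI
          rw [if_neg (Finset.disjoint_right.1 hdisjFN hI)]
      rw [hsum]
      have : x - ((∑ F ∈ Fac, δ F • eVec F) + ∑ I ∈ N', c' I • eVec I)
          = x' - ∑ I ∈ N', c' I • eVec I := by
        rw [hx'def]; ring
      rw [this]
      exact hmem'

end Exist

theorem nested_fan (B : Finset (Finset V)) (hB : IsBuilding Finset.univ B) :
    (∀ N₁ N₂ : Finset (Finset V), IsNested B N₁ → IsNested B N₂ →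
      nestedCone B N₁ ∩ nestedCone B N₂ = nestedCone B (N₁ ∩ N₂)) ∧
    (⋃ N ∈ {N : Finset (Finset V) | IsNested B N}, nestedCone B N) = Set.univ := by
  constructor
  · intro N₁ N₂ hN₁ hN₂
    ext v
    simp only [Set.mem_inter_iff, nestedCone, Set.mem_setOf_eq]
    constructor
    · rintro ⟨⟨c, hc, hv1⟩, ⟨d, hd, hv2⟩⟩
      have h12 : (compSpan B).mkQ (∑ I ∈ N₁, c I • eVec I)
          = (compSpan B).mkQ (∑ I ∈ N₂, d I • eVec I) := by rw [← hv1, ← hv2]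
      rw [Submodule.mkQ_apply, Submodule.mkQ_apply, Submodule.Quotient.eq] at h12
      have hrep : (∑ I ∈ N₁, c I • eVec I)
          = (∑ I ∈ N₂, d I • eVec I) +
            ((∑ I ∈ N₁, c I • eVec I) - (∑ I ∈ N₂, d I • eVec I)) := by abel
      have hkey : ∀ I ∈ N₁, I ∉ N₂ → c I = 0 := fun I hI hIN2 =>
        lemU hB hN₁ hN₂ hc hd h12 hrep hI hIN2
      have hsum : ∑ I ∈ N₁ ∩ N₂, c I • eVec I = ∑ I ∈ N₁, c I • eVec I := by
        apply Finset.sum_subset Finset.inter_subset_left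
        intro I hI hnI
        rw [hkey I hI (fun h2 => hnI (Finset.mem_inter.2 ⟨hI, h2⟩)), zero_smul]
      exact ⟨c, hc, by rw [hv1, ← hsum]⟩
    · rintro ⟨c, hc, hv⟩
      constructor
      · refine ⟨fun I => if I ∈ N₂ then c I else 0, fun I => ?_, ?_⟩
        · by_cases h : I ∈ N₂ <;> simp [h, hc I]
        · have h1 : ∑ I ∈ N₁ ∩ N₂, (if I ∈ N₂ then c I else 0) • eVec I
              = ∑ I ∈ N₁, (if I ∈ N₂ then c I else 0) • eVec I :=
            Finset.sum_subset Finset.inter_subset_left (fun I hI hnI => by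
              rw [if_neg (fun h2 => hnI (Finset.mem_inter.2 ⟨hI, h2⟩)), zero_smul])
          have h2 : ∑ I ∈ N₁ ∩ N₂, (if I ∈ N₂ then c I else 0) • eVec I
              = ∑ I ∈ N₁ ∩ N₂, c I • eVec I :=
            Finset.sum_congr rfl (fun I hI => by rw [if_pos (Finset.mem_inter.1 hI).2])
          rw [hv, ← h1, h2]
      · refine ⟨fun I => if I ∈ N₁ then c I else 0, fun I => ?_, ?_⟩
        · by_cases h : I ∈ N₁ <;> simp [h, hc I]
        · have h1 : ∑ I ∈ N₁ ∩ N₂, (if I ∈ N₁ then c I else 0) • eVec I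
              = ∑ I ∈ N₂, (if I ∈ N₁ then c I else 0) • eVec I :=
            Finset.sum_subset Finset.inter_subset_right (fun I hI hnI => by
              rw [if_neg (fun h2 => hnI (Finset.mem_inter.2 ⟨h2, hI⟩)), zero_smul])
          have h2 : ∑ I ∈ N₁ ∩ N₂, (if I ∈ N₁ then c I else 0) • eVec I
              = ∑ I ∈ N₁ ∩ N₂, c I • eVec I :=
            Finset.sum_congr rfl (fun I hI => by rw [if_pos (Finset.mem_inter.1 hI).1])
          rw [hv, ← h1, h2]
  · apply Set.eq_univ_iff_forall.2
    intro v
    obtain ⟨x, rfl⟩ := Submodule.mkQ_surjective (compSpan B) v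
    obtain ⟨N, c, hN, hc, _, hmem⟩ := lemE hB (Apos B x).card x (le_refl _)
    apply Set.mem_biUnion (show N ∈ {N : Finset (Finset V) | IsNested B N} from hN)
    refine ⟨c, hc, ?_⟩
    rw [Submodule.mkQ_apply, Submodule.mkQ_apply, Submodule.Quotient.eq]
    exact hmem
end

section
/- For all integers n ≥ 1 and nonnegative integers p_1, p_2, r ≤ n with p_1 + p_2 = ℓ + r and ℓ < min(p_1, p_2), the function f_n(m) = m(2^{n−1} − 2^{m−1}) satisfies f_n(p_1) + f_n(p_2) − ℓ·f_n(1) − f_n(r) > 0. -/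
lemma key_nat (ℓ k b : ℕ) (hk : 1 ≤ k) (hb : ℓ + k ≤ b) :
    (ℓ + k) * 2 ^ (ℓ + k - 1) + b * 2 ^ (b - 1) < (b + k) * 2 ^ (b + k - 1) + ℓ := by
  obtain ⟨e, he⟩ : ∃ e, ℓ + k = e + 1 := ⟨ℓ + k - 1, by omega⟩
  obtain ⟨c, hc⟩ : ∃ c, b = c + 1 := ⟨b - 1, by omega⟩
  have hec : e ≤ c := by omega
  have h1 : 2 ^ e ≤ 2 ^ c := Nat.pow_le_pow_right (by norm_num) hec
  have h2 : 2 * 2 ^ c ≤ 2 ^ (c + k) := by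
    calc 2 * 2 ^ c = 2 ^ (c + 1) := by ring
    _ ≤ 2 ^ (c + k) := Nat.pow_le_pow_right (by norm_num) (by omega)
  rw [he, hc]
  have h3 : c + 1 + k - 1 = c + k := by omega
  rw [h3]
  simp only [Nat.add_sub_cancel]
  have h4 : e + 1 ≤ c + 1 := by omega
  have h5 : (0:ℕ) < 2 ^ c := Nat.pow_pos (by norm_num)
  nlinarith [Nat.mul_le_mul h4 h1, Nat.mul_le_mul_left (c + 1 + k) h2]

/-- The key convexity inequality for `f_n(m) = m (2^{n-1} - 2^{m-1})`. -/
theorem f_convexity_simplified (n p₁ p₂ r ℓ : ℕ) (hn : 1 ≤ n)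
    (hp₁ : p₁ ≤ n) (hp₂ : p₂ ≤ n) (hr : r ≤ n)
    (hsum : p₁ + p₂ = ℓ + r) (hℓ₁ : ℓ < p₁) (hℓ₂ : ℓ < p₂) :
    0 < (fun m : ℕ => (m : ℤ) * (2 ^ (n - 1) - 2 ^ (m - 1))) p₁ +
        (fun m : ℕ => (m : ℤ) * (2 ^ (n - 1) - 2 ^ (m - 1))) p₂ -
        (ℓ : ℤ) * (fun m : ℕ => (m : ℤ) * (2 ^ (n - 1) - 2 ^ (m - 1))) 1 -
        (fun m : ℕ => (m : ℤ) * (2 ^ (n - 1) - 2 ^ (m - 1))) r := by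
  have key : p₁ * 2 ^ (p₁ - 1) + p₂ * 2 ^ (p₂ - 1) < r * 2 ^ (r - 1) + ℓ := by
    rcases le_total p₁ p₂ with h | h
    · have h1 : p₁ = ℓ + (p₁ - ℓ) := by omega
      have h2 : r = p₂ + (p₁ - ℓ) := by omega
      rw [h1, h2]
      exact key_nat ℓ (p₁ - ℓ) p₂ (by omega) (by omega)
    · have h1 : p₂ = ℓ + (p₂ - ℓ) := by omega
      have h2 : r = p₁ + (p₂ - ℓ) := by omega
      rw [h1, h2]
      have := key_nat ℓ (p₂ - ℓ) p₁ (by omega) (by omega)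
      omega
  have key' : (p₁ : ℤ) * 2 ^ (p₁ - 1) + (p₂ : ℤ) * 2 ^ (p₂ - 1)
      < (r : ℤ) * 2 ^ (r - 1) + (ℓ : ℤ) := by exact_mod_cast key
  have hc : (p₁ : ℤ) + p₂ = ℓ + r := by exact_mod_cast hsum
  have h1 : ((p₁ : ℤ) + p₂ - ℓ - r) * 2 ^ (n - 1) = 0 := by
    have : (p₁ : ℤ) + p₂ - ℓ - r = 0 := by linarith
    rw [this]; ring
  simp only []
  norm_num
  nlinarith [key', h1]
end

section
/- A building set B is graphical (i.e., B = B(Γ) for some graph Γ on S, where B(Γ) consists of the vertex sets of connected induced subgraphs) if and only if whenever J, I_1, ..., I_k ∈ B and J ∪ I_1 ∪ ... ∪ I_k ∈ B, there exists some i with J ∪ I_i ∈ B. -/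
open Finset

variable {V : Type*} [Fintype V] [DecidableEq V]

lemma grow_aux (B : Finset (Finset V)) (hB : IsBuilding Finset.univ B)
    (hP : ∀ J ∈ B, ∀ F : Finset (Finset V), F ⊆ B → F.Nonempty →
      J ∪ F.sup id ∈ B → ∃ I ∈ F, J ∪ I ∈ B)
    {C J : Finset V} (hC : C ∈ B) (hJ : J ∈ B) (hJC : J ⊆ C) (hne : J ≠ C) :
    ∃ x ∈ C \ J, J ∪ {x} ∈ B := by
  set F : Finset (Finset V) := (C \ J).image singleton with hF
  have hsub : F ⊆ B := by
    intro I hI; simp only [hF, mem_image] at hI; obtain ⟨x, _, rfl⟩ := hI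
    exact hB.2.2 x (mem_univ x)
  have hCJ : (C \ J).Nonempty := by
    rw [sdiff_nonempty]; intro h; exact hne (subset_antisymm hJC h)
  have hFne : F.Nonempty := hCJ.image _
  have hsup : F.sup id = C \ J := by
    rw [hF, sup_image]
    simpa using (C \ J).sup_singleton'
  have hUn : J ∪ F.sup id ∈ B := by
    rw [hsup, union_sdiff_of_subset hJC]; exact hC
  obtain ⟨I, hIF, hJI⟩ := hP J hJ F hsub hFne hUn
  simp only [hF, mem_image] at hIF
  obtain ⟨x, hx, rfl⟩ := hIF
  exact ⟨x, hx, hJI⟩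

lemma exists_coatom (B : Finset (Finset V)) (hB : IsBuilding Finset.univ B)
    (hP : ∀ J ∈ B, ∀ F : Finset (Finset V), F ⊆ B → F.Nonempty →
      J ∪ F.sup id ∈ B → ∃ I ∈ F, J ∪ I ∈ B)
    {C : Finset V} (hC : C ∈ B) (h2 : 2 ≤ C.card) :
    ∃ x ∈ C, C \ {x} ∈ B := by
  have key : ∀ n (J : Finset V), J ∈ B → J ⊆ C → C.card = J.card + (n + 1) →
      ∃ D ∈ B, D ⊆ C ∧ C.card = D.card + 1 := by
    intro n
    induction n with
    | zero => intro J hJ hJC hcard; exact ⟨J, hJ, hJC, hcard⟩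
    | succ n ih =>
      intro J hJ hJC hcard
      have hne : J ≠ C := by intro h; subst h; omega
      obtain ⟨x, hx, hJx⟩ := grow_aux B hB hP hC hJ hJC hne
      rw [mem_sdiff] at hx
      refine ih (J ∪ {x}) hJx (union_subset hJC (singleton_subset_iff.mpr hx.1)) ?_
      rw [union_comm, ← insert_eq, card_insert_of_notMem hx.2]
      omega
  obtain ⟨a, ha⟩ := (hB.1 C hC).1
  obtain ⟨D, hD, hDC, hcard⟩ := key (C.card - 2) {a} (hB.2.2 a (mem_univ a))
      (singleton_subset_iff.mpr ha) (by rw [card_singleton]; omega)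
  have hCD : (C \ D).card = 1 := by rw [card_sdiff_of_subset hDC]; omega
  obtain ⟨x, hx⟩ := card_eq_one.mp hCD
  have hxCD : x ∈ C \ D := hx ▸ mem_singleton_self x
  rw [mem_sdiff] at hxCD
  refine ⟨x, hxCD.1, ?_⟩
  have : C \ {x} = D := by
    rw [← hx, sdiff_sdiff_right_self, inf_eq_inter, inter_eq_right.mpr hDC]
  rwa [this]

lemma edge_aux (B : Finset (Finset V)) (hB : IsBuilding Finset.univ B)
    (hP : ∀ J ∈ B, ∀ F : Finset (Finset V), F ⊆ B → F.Nonempty →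
      J ∪ F.sup id ∈ B → ∃ I ∈ F, J ∪ I ∈ B)
    {C : Finset V} (hC : C ∈ B) {x : V} (hx : x ∈ C) (hne : (C \ {x}).Nonempty) :
    ∃ y ∈ C \ {x}, ({x, y} : Finset V) ∈ B := by
  set D := C \ {x} with hD
  set F : Finset (Finset V) := D.image singleton with hF
  have hsub : F ⊆ B := by
    intro I hI; simp only [hF, mem_image] at hI; obtain ⟨y, _, rfl⟩ := hI
    exact hB.2.2 y (mem_univ y)
  have hsup : F.sup id = D := by rw [hF, sup_image]; simpa using D.sup_singleton'
  have hUn : {x} ∪ F.sup id ∈ B := by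
    rw [hsup, hD, ← insert_eq, sdiff_singleton_eq_erase, insert_erase hx]
    exact hC
  obtain ⟨I, hIF, hJI⟩ := hP {x} (hB.2.2 x (mem_univ x)) F hsub (hne.image _) hUn
  simp only [hF, mem_image] at hIF
  obtain ⟨y, hy, rfl⟩ := hIF
  refine ⟨y, hy, ?_⟩
  rwa [← insert_eq] at hJI

lemma sup_mem_aux (B : Finset (Finset V)) (hB : IsBuilding Finset.univ B) {a : V} :
    ∀ (F : Finset (Finset V)), F.Nonempty → F ⊆ B → (∀ I ∈ F, a ∈ I) → F.sup id ∈ B := by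
  intro F hFne
  induction hFne using Finset.Nonempty.cons_induction with
  | singleton I => intro h1 _; simpa using h1 (mem_singleton_self I)
  | cons I F hIF hFne ih =>
    intro hsub ha
    rw [sup_cons]
    have h1 : I ∈ B := hsub (mem_cons_self _ _)
    have h2 : F.sup id ∈ B := ih (fun J hJ => hsub (mem_cons.mpr (Or.inr hJ)))
      (fun J hJ => ha J (mem_cons.mpr (Or.inr hJ)))
    have hint : (I ∩ F.sup id).Nonempty := by
      obtain ⟨K, hK⟩ := hFne
      exact ⟨a, mem_inter.mpr ⟨ha I (mem_cons_self _ _),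
        (le_sup (f := id) hK) (ha K (mem_cons.mpr (Or.inr hK)))⟩⟩
    exact hB.2.1 I h1 _ h2 hint

lemma conn_singleton (Γ : SimpleGraph V) (a : V) :
    (Γ.induce ({a} : Set V)).Connected := by
  rw [SimpleGraph.connected_iff]
  refine ⟨fun x y => ?_, ⟨⟨a, rfl⟩⟩⟩
  have : x = y := Subsingleton.elim x y
  rw [this]

lemma walk_mem_aux (B : Finset (Finset V)) (hB : IsBuilding Finset.univ B)
    (Γ : SimpleGraph V) (hedge : ∀ u v : V, Γ.Adj u v → ({u, v} : Finset V) ∈ B)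
    (C : Finset V) :
    ∀ {x y : (C : Set V)} (_ : (Γ.induce (C : Set V)).Walk x y),
      ∃ W ∈ B, (x : V) ∈ W ∧ (y : V) ∈ W ∧ W ⊆ C := by
  intro x y p
  induction p with
  | @nil u =>
    refine ⟨{(u : V)}, hB.2.2 _ (mem_univ _), mem_singleton_self _, mem_singleton_self _, ?_⟩
    exact singleton_subset_iff.mpr (by exact_mod_cast u.2)
  | @cons u w y h p ih =>
    obtain ⟨W, hW, hwW, hyW, hWC⟩ := ih
    have hadj : Γ.Adj (u : V) (w : V) := h
    have hp : ({(u : V), (w : V)} : Finset V) ∈ B := hedge _ _ hadj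
    have hUn : ({(u : V), (w : V)} : Finset V) ∪ W ∈ B :=
      hB.2.1 _ hp _ hW ⟨w, mem_inter.mpr ⟨by simp, hwW⟩⟩
    refine ⟨_, hUn, by simp, mem_union_right _ hyW, union_subset ?_ hWC⟩
    intro z hz
    rcases mem_insert.mp hz with h1 | h1
    · subst h1; exact_mod_cast u.2
    · rw [mem_singleton.mp h1]; exact_mod_cast w.2

lemma mem_connected (B : Finset (Finset V)) (hB : IsBuilding Finset.univ B)
    (hP : ∀ J ∈ B, ∀ F : Finset (Finset V), F ⊆ B → F.Nonempty →
      J ∪ F.sup id ∈ B → ∃ I ∈ F, J ∪ I ∈ B)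
    (Γ : SimpleGraph V)
    (hΓ : ∀ u v : V, u ≠ v → ({u, v} : Finset V) ∈ B → Γ.Adj u v) :
    ∀ C : Finset V, C ∈ B → (Γ.induce (C : Set V)).Connected := by
  intro C
  induction C using Finset.strongInductionOn with
  | _ C ih =>
    intro hC
    have hne := (hB.1 C hC).1
    by_cases h2 : 2 ≤ C.card
    · obtain ⟨x, hxC, hD⟩ := exists_coatom B hB hP hC h2
      have hDC : C \ {x} ⊂ C := by
        rw [sdiff_singleton_eq_erase]; exact erase_ssubset hxC
      have hconnD := ih _ hDC hD
      have hDne : (C \ {x}).Nonempty := (hB.1 _ hD).1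
      obtain ⟨y, hy, hxy⟩ := edge_aux B hB hP hC hxC hDne
      have hy' := mem_sdiff.mp hy
      have hadj : Γ.Adj y x :=
        (hΓ x y (fun h => hy'.2 (h ▸ mem_singleton_self x)) hxy).symm
      have hcs : (C : Set V) = ((C \ {x} : Finset V) : Set V) ∪ ({x} : Set V) := by
        rw [← coe_singleton, ← coe_union, sdiff_union_self_eq_union,
          union_eq_left.mpr (singleton_subset_iff.mpr hxC)]
      rw [hcs]
      exact SimpleGraph.connected_induce_union hconnD.preconnected (conn_singleton Γ x).preconnected
        (by exact_mod_cast hy) rfl hadj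
    · have h1 : C.card = 1 := by
        have := card_pos.mpr hne; omega
      obtain ⟨a, rfl⟩ := card_eq_one.mp h1
      rw [coe_singleton]
      exact conn_singleton Γ a

/-- Characterization of graphical building sets. -/
theorem graphical_characterization [Nonempty V] (B : Finset (Finset V))
    (hB : IsBuilding Finset.univ B) :
    (∃ Γ : SimpleGraph V, ∀ C : Finset V,
        C ∈ B ↔ C.Nonempty ∧ (Γ.induce (C : Set V)).Connected) ↔
    (∀ J ∈ B, ∀ F : Finset (Finset V), F ⊆ B → F.Nonempty →
      J ∪ F.sup id ∈ B → ∃ I ∈ F, J ∪ I ∈ B) := by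
  constructor
  · rintro ⟨Γ, hchar⟩ J hJ F hF hFne hUn
    by_cases hsub : F.sup id ⊆ J
    · obtain ⟨I, hI⟩ := hFne
      have hIJ : I ⊆ J := subset_trans (by simpa using le_sup (f := id) hI) hsub
      exact ⟨I, hI, by rwa [union_eq_left.mpr hIJ]⟩
    · obtain ⟨v, hvS, hvJ⟩ := not_subset.mp hsub
      set U := J ∪ F.sup id with hU
      have hUconn := ((hchar U).mp hUn).2
      obtain ⟨j, hj⟩ := (hchar J).mp hJ |>.1
      have hjU : j ∈ U := mem_union_left _ hj
      have hvU : v ∈ U := mem_union_right _ hvS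
      obtain ⟨p⟩ := hUconn.preconnected ⟨j, by exact_mod_cast hjU⟩ ⟨v, by exact_mod_cast hvU⟩
      obtain ⟨d, _, hdfst, hdsnd⟩ := p.exists_boundary_dart {z : (U : Set V) | (z : V) ∈ J}
        hj hvJ
      have hadj : Γ.Adj (d.fst : V) (d.snd : V) := d.adj
      have hsndU : (d.snd : V) ∈ U := by exact_mod_cast (d.snd : (U : Set V)).2
      have hsndS : (d.snd : V) ∈ F.sup id := by
        rcases mem_union.mp hsndU with h | h
        · exact absurd h hdsnd
        · exact h
      obtain ⟨I, hIF, hdI⟩ := mem_sup.mp hsndS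
      refine ⟨I, hIF, (hchar (J ∪ I)).mpr ⟨⟨j, mem_union_left _ hj⟩, ?_⟩⟩
      rw [coe_union]
      exact SimpleGraph.connected_induce_union ((hchar J).mp hJ).2.preconnected
        ((hchar I).mp (hF hIF)).2.preconnected hdfst hdI hadj
  · intro hP
    let Γ : SimpleGraph V :=
      { Adj := fun u v => u ≠ v ∧ ({u, v} : Finset V) ∈ B
        symm := ⟨fun u v ⟨h1, h2⟩ => ⟨h1.symm, by rwa [pair_comm]⟩⟩
        loopless := ⟨fun u ⟨h1, _⟩ => h1 rfl⟩ }
    have hedge : ∀ u v : V, Γ.Adj u v → ({u, v} : Finset V) ∈ B := fun u v h => h.2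
    have hΓ : ∀ u v : V, u ≠ v → ({u, v} : Finset V) ∈ B → Γ.Adj u v :=
      fun u v h1 h2 => ⟨h1, h2⟩
    refine ⟨Γ, fun C => ⟨fun hC => ⟨(hB.1 C hC).1, mem_connected B hB hP Γ hΓ C hC⟩, ?_⟩⟩
    rintro ⟨hne, hconn⟩
    obtain ⟨a, ha⟩ := hne
    have walks : ∀ v ∈ C, ∃ W ∈ B, a ∈ W ∧ v ∈ W ∧ W ⊆ C := by
      intro v hv
      obtain ⟨p⟩ := hconn.preconnected ⟨a, by exact_mod_cast ha⟩ ⟨v, by exact_mod_cast hv⟩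
      exact walk_mem_aux B hB Γ hedge C p
    choose f hfB hfa hfv hfC using walks
    set F : Finset (Finset V) := C.attach.image (fun v => f v.1 v.2) with hFdef
    have hFsub : F ⊆ B := by
      intro I hI; simp only [hFdef, mem_image] at hI; obtain ⟨v, _, rfl⟩ := hI
      exact hfB _ _
    have hFne : F.Nonempty := (attach_nonempty_iff.mpr ⟨a, ha⟩).image _
    have hFa : ∀ I ∈ F, a ∈ I := by
      intro I hI; simp only [hFdef, mem_image] at hI; obtain ⟨v, _, rfl⟩ := hI
      exact hfa _ _
    have hsup : F.sup id = C := by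
      apply subset_antisymm
      · intro v hv
        obtain ⟨I, hI, hvI⟩ := mem_sup.mp hv
        simp only [hFdef, mem_image] at hI; obtain ⟨w, _, rfl⟩ := hI
        exact hfC _ _ hvI
      · intro v hv
        have hmem : f v hv ∈ F := by
          rw [hFdef]; exact mem_image_of_mem _ (mem_attach C ⟨v, hv⟩)
        exact (by simpa using le_sup (f := id) hmem : f v hv ⊆ F.sup id) (hfv v hv)
    have hsupB := sup_mem_aux B hB F hFne hFsub hFa
    rwa [hsup] at hsupB
end

section
/- If B is a graphical building set, then a subset N ⊆ B − B_max is nested if and only if every pair I, J ∈ N satisfies: I ⊆ J, or J ⊆ I, or I ∪ J ∉ B. (I.e., the nested complex of a graphical building is a clique complex.) -/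
open Finset

variable {V : Type*} [Fintype V] [DecidableEq V]

omit [Fintype V] [DecidableEq V] in
lemma exists_crossing' {Γ : SimpleGraph V} {s : Set V} (t : Set V) :
    ∀ {a b : s} (_ : (Γ.induce s).Walk a b), (a : V) ∈ t → (b : V) ∉ t →
      ∃ x ∈ t, ∃ y ∈ s, y ∉ t ∧ Γ.Adj x y := by
  intro a b p
  induction p with
  | nil => intro h1 h2; exact absurd h1 h2
  | @cons u c w h p ih =>
    intro hu hw
    by_cases hc : (c : V) ∈ t
    · exact ih hc hw
    · exact ⟨u, hu, c, c.2, hc, h⟩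

/-- The nested complex of a graphical building is a clique complex. -/
theorem graphical_nested_iff_pairwise [Nonempty V] (B : Finset (Finset V))
    (hB : IsBuilding Finset.univ B) (Γ : SimpleGraph V)
    (hgr : ∀ C : Finset V, C ∈ B ↔ C.Nonempty ∧ (Γ.induce (C : Set V)).Connected)
    (N : Finset (Finset V)) :
    IsNested B N ↔
      N ⊆ B \ buildingMax B ∧
      ∀ I ∈ N, ∀ J ∈ N, I ⊆ J ∨ J ⊆ I ∨ I ∪ J ∉ B := by
  constructor
  · rintro ⟨h1, h2⟩
    refine ⟨h1, fun I hI J hJ => ?_⟩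
    by_cases hIJ : I ⊆ J
    · exact Or.inl hIJ
    by_cases hJI : J ⊆ I
    · exact Or.inr (Or.inl hJI)
    refine Or.inr (Or.inr ?_)
    have hne : I ≠ J := fun h => hIJ (h ▸ le_refl I)
    have hsub : ({I, J} : Finset (Finset V)) ⊆ N := by
      intro x hx; rcases Finset.mem_insert.1 hx with h | h
      · exact h ▸ hI
      · exact (Finset.mem_singleton.1 h) ▸ hJ
    have hcard : 2 ≤ ({I, J} : Finset (Finset V)).card := by
      rw [Finset.card_insert_of_notMem (by simp [hne]), Finset.card_singleton]
    have hanti : ∀ X ∈ ({I, J} : Finset (Finset V)), ∀ Y ∈ ({I, J} : Finset (Finset V)),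
        X ≠ Y → ¬ X ⊆ Y := by
      intro X hX Y hY hXY
      rcases Finset.mem_insert.1 hX with h | h <;> rcases Finset.mem_insert.1 hY with h' | h' <;>
        simp_all [Finset.mem_singleton]
    have := h2 {I, J} hsub hcard hanti
    simpa [Finset.sup_insert, Finset.sup_singleton] using this
  · rintro ⟨h1, h2⟩
    refine ⟨h1, fun F hFN hcard hanti hUB => ?_⟩
    -- U := F.sup id ∈ B, derive a contradiction
    set U := F.sup id with hU
    have hNB : ∀ I ∈ N, I ∈ B := fun I hI => (Finset.mem_sdiff.1 (h1 hI)).1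
    obtain ⟨hUne, hUconn⟩ := (hgr U).1 hUB
    -- pick I ∈ F
    obtain ⟨I, hIF⟩ := Finset.card_pos.1 (by omega : 0 < F.card)
    have hIB : I ∈ B := hNB I (hFN hIF)
    obtain ⟨hIne, _⟩ := (hgr I).1 hIB
    have hIU : I ⊆ U := Finset.le_sup (f := id) hIF
    -- there is a vertex of U outside I
    have hex : ∃ v ∈ U, v ∉ I := by
      by_contra h
      push_neg at h
      obtain ⟨J, hJF, hJI⟩ : ∃ J ∈ F, J ≠ I := by
        by_contra hh
        push_neg at hh
        have : F ⊆ {I} := fun x hx => Finset.mem_singleton.2 (hh x hx)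
        have := Finset.card_le_card this
        simp at this; omega
      exact hanti J hJF I hIF hJI (fun x hx => h x (Finset.le_sup (f := id) hJF hx))
    obtain ⟨v, hvU, hvI⟩ := hex
    obtain ⟨u, huI⟩ := hIne
    -- get a crossing edge
    have huU : u ∈ U := hIU huI
    obtain ⟨p⟩ := hUconn ⟨u, by simpa using huU⟩ ⟨v, by simpa using hvU⟩
    obtain ⟨a, haI, b, hbU, hbI, hab⟩ :=
      exists_crossing' (Γ := Γ) (s := (U : Set V)) (↑I : Set V) p (by simpa using huI)
        (by simpa using hvI)
    have hbU' : b ∈ U := by simpa using hbU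
    obtain ⟨J, hJF, hbJ⟩ := Finset.mem_sup.1 hbU'
    have hbJ' : b ∈ J := hbJ
    have hJB : J ∈ B := hNB J (hFN hJF)
    obtain ⟨_, hJconn⟩ := (hgr J).1 hJB
    have hIJne : I ≠ J := fun h => hbI (by rw [h]; exact_mod_cast hbJ')
    -- I ∪ J connected
    have hconn : (Γ.induce ((I ∪ J : Finset V) : Set V)).Connected := by
      rw [Finset.coe_union]
      exact SimpleGraph.connected_induce_union ((hgr I).1 hIB).2.preconnected hJconn.preconnected
        (by simpa using haI) (by simpa using hbJ') hab
    have hIJB : I ∪ J ∈ B := (hgr _).2 ⟨⟨u, Finset.mem_union_left _ huI⟩, hconn⟩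
    rcases h2 I (hFN hIF) J (hFN hJF) with h | h | h
    · exact hanti I hIF J hJF hIJne h
    · exact hanti J hJF I hIF hIJne.symm h
    · exact h hIJB
end
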